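/- arXiv:1908.03914 — 9 statements merged into one kernel-verified Lean document; each statement's English description precedes it below -/
import Mathlib

section
/- Let f₁, …, f_m : ℕ → ℤ and n ≥ 0. Then the product rule for finite differences holds: Δⁿ(f₁⋯f_m)(x) = Σ_{a₁+⋯+a_m=n} (n!/(a₁!⋯a_m!)) · Δ^{a₁}(S^{a₂+⋯+a_m}f₁)(x) · Δ^{a₂}(S^{a₃+⋯+a_m}f₂)(x) ⋯ Δ^{a_m}(f_m)(x), where the sum is over all tuples of nonnegative integers a₁, …, a_m summing to n. In particular, for two functions f, g: Δⁿ(f·g)(x) = Σ_{k=0}^{n} C(n,k) · Δ^{n−k}(S^k f)(x) · Δ^k(g)(x). -/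
/-- The finite difference operator: `(Δ f)(x) = f(x+1) - f(x)`. -/
def delta (f : ℕ → ℤ) : ℕ → ℤ := fun x => f (x + 1) - f x

/-- The shift operator: `(S f)(x) = f(x+1)`. -/
def shift (f : ℕ → ℤ) : ℕ → ℤ := fun x => f (x + 1)

lemma delta_iter_add (n : ℕ) (f g : ℕ → ℤ) :
    delta^[n] (fun y => f y + g y) = fun y => delta^[n] f y + delta^[n] g y := by
  induction n generalizing f g with
  | zero => rfl
  | succ n ih =>
    rw [Function.iterate_succ_apply, Function.iterate_succ_apply, Function.iterate_succ_apply]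
    rw [show delta (fun y => f y + g y) = fun y => delta f y + delta g y from by
      funext y; simp [delta]; ring]
    exact ih _ _

lemma delta_mul (f g : ℕ → ℤ) :
    delta (fun y => f y * g y) = fun y => shift f y * delta g y + delta f y * g y := by
  funext y; simp only [delta, shift]; ring

lemma shift_iter_delta (k : ℕ) (f : ℕ → ℤ) :
    shift^[k] (delta f) = delta (shift^[k] f) := by
  induction k generalizing f with
  | zero => rfl
  | succ k ih => rw [Function.iterate_succ_apply, Function.iterate_succ_apply,
      show shift (delta f) = delta (shift f) from rfl, ih]

lemma leibniz (n : ℕ) (f g : ℕ → ℤ) (x : ℕ) :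
    delta^[n] (fun y => f y * g y) x =
      ∑ k ∈ Finset.range (n + 1),
        (n.choose k : ℤ) * delta^[n - k] (shift^[k] f) x * delta^[k] g x := by
  induction n generalizing f g x with
  | zero => simp
  | succ n ih =>
    set T : ℕ → ℤ := fun j => (delta^[n + 1 - j] (shift^[j] f) x) * delta^[j] g x with hT
    have key : delta^[n+1] (fun y => f y * g y) x
        = (∑ k ∈ Finset.range (n + 1), (n.choose k : ℤ) * T (k+1))
        + (∑ k ∈ Finset.range (n + 1), (n.choose k : ℤ) * T k) := by
      rw [Function.iterate_succ_apply, delta_mul, delta_iter_add]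
      simp only
      rw [ih (shift f) (delta g) x, ih (delta f) g x]
      congr 1
      · refine Finset.sum_congr rfl fun k hk => ?_
        rw [hT]
        simp only [← Function.iterate_succ_apply delta, ← Function.iterate_succ_apply shift]
        have : n + 1 - (k + 1) = n - k := by omega
        rw [this]; ring
      · refine Finset.sum_congr rfl fun k hk => ?_
        rw [hT]
        simp only [Finset.mem_range] at hk
        have h1 : delta^[n-k] (shift^[k] (delta f)) = delta^[n+1-k] (shift^[k] f) := by
          rw [shift_iter_delta, ← Function.iterate_succ_apply delta]
          congr 1; omega
        rw [h1]; ring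
    have goal_eq : ∑ k ∈ Finset.range (n + 1 + 1),
          ((n+1).choose k : ℤ) * delta^[n + 1 - k] (shift^[k] f) x * delta^[k] g x
        = ∑ k ∈ Finset.range (n + 2), ((n+1).choose k : ℤ) * T k :=
      Finset.sum_congr rfl fun k _ => mul_assoc _ _ _
    have h0 : ∑ k ∈ Finset.range (n+1), (n.choose k : ℤ) * T k
        = (∑ i ∈ Finset.range (n+1), (n.choose (i+1) : ℤ) * T (i+1)) + (n.choose 0 : ℤ) * T 0 := by
      rw [Finset.sum_range_succ' (fun k => (n.choose k : ℤ) * T k) n,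
        Finset.sum_range_succ (fun i => (n.choose (i+1) : ℤ) * T (i+1)) n]
      simp [Nat.choose_succ_self]
    rw [key, goal_eq]
    conv_rhs => rw [Finset.sum_range_succ']
    have split : ∀ i ∈ Finset.range (n+1), ((n+1).choose (i+1) : ℤ) * T (i+1)
        = (n.choose i : ℤ) * T (i+1) + (n.choose (i+1) : ℤ) * T (i+1) := by
      intro i _; rw [Nat.choose_succ_succ]; push_cast; ring
    rw [Finset.sum_congr rfl split, Finset.sum_add_distrib, h0]
    simp only [Nat.choose_zero_right, Nat.cast_one]
    ring

lemma multinomial_fin_cons (m p : ℕ) (b : Fin m → ℕ) :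
    Nat.multinomial Finset.univ (Fin.cons p b : Fin (m+1) → ℕ)
      = (p + ∑ j, b j).choose p * Nat.multinomial Finset.univ b := by
  rw [Fin.univ_succ, Nat.multinomial_cons _ _]
  congr 1
  · rw [Finset.sum_map]
    simp [Fin.succEmb]
  · unfold Nat.multinomial
    rw [Finset.sum_map, Finset.prod_map]
    simp [Fin.succEmb]

lemma sum_AT_succ (m n : ℕ) (F : (Fin (m+1) → ℕ) → ℤ) :
    ∑ a ∈ Finset.Nat.antidiagonalTuple (m+1) n, F a
      = ∑ k ∈ Finset.range (n+1), ∑ b ∈ Finset.Nat.antidiagonalTuple m k, F (Fin.cons (n-k) b) := by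
  rw [Finset.sum_sigma']
  refine Finset.sum_nbij'
    (i := fun (a : Fin (m+1) → ℕ) => (⟨∑ j : Fin m, a j.succ, Fin.tail a⟩ : Σ _ : ℕ, Fin m → ℕ))
    (j := fun p => Fin.cons (n - p.1) p.2) ?_ ?_ ?_ ?_ ?_
  · intro a ha
    rw [Finset.Nat.mem_antidiagonalTuple, Fin.sum_univ_succ] at ha
    simp only [Finset.mem_sigma, Finset.mem_range, Finset.Nat.mem_antidiagonalTuple]
    constructor
    · omega
    · rfl
  · intro p hp
    simp only [Finset.mem_sigma, Finset.mem_range, Finset.Nat.mem_antidiagonalTuple] at hp ⊢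
    rw [Fin.sum_univ_succ]
    simp only [Fin.cons_zero, Fin.cons_succ]
    omega
  · intro a ha
    rw [Finset.Nat.mem_antidiagonalTuple, Fin.sum_univ_succ] at ha
    have : n - ∑ j : Fin m, a j.succ = a 0 := by omega
    simp only [this]
    exact Fin.cons_self_tail a
  · intro p hp
    simp only [Finset.mem_sigma, Finset.mem_range, Finset.Nat.mem_antidiagonalTuple] at hp
    ext1
    · simp [Fin.cons_succ, hp.2]
    · simp [Fin.tail_cons]
  · intro a ha
    rw [Finset.Nat.mem_antidiagonalTuple, Fin.sum_univ_succ] at ha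
    have : n - ∑ j : Fin m, a j.succ = a 0 := by omega
    simp only [this, Fin.cons_self_tail]

lemma filter_sum_zero (m p : ℕ) (b : Fin m → ℕ) :
    ∑ j ∈ Finset.univ.filter (fun j => (0 : Fin (m+1)) < j), (Fin.cons p b : Fin (m+1) → ℕ) j
      = ∑ j, b j := by
  rw [Finset.sum_filter, Fin.sum_univ_succ]
  simp [Fin.succ_pos]

lemma filter_sum_succ (m p : ℕ) (b : Fin m → ℕ) (i : Fin m) :
    ∑ j ∈ Finset.univ.filter (fun j => i.succ < j), (Fin.cons p b : Fin (m+1) → ℕ) j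
      = ∑ j ∈ Finset.univ.filter (fun j => i < j), b j := by
  rw [Finset.sum_filter, Finset.sum_filter, Fin.sum_univ_succ]
  simp [Fin.succ_lt_succ_iff, Fin.not_lt_zero]

lemma delta_iter_zero (n : ℕ) : delta^[n] (fun _ => (0:ℤ)) = fun _ => 0 := by
  induction n with
  | zero => rfl
  | succ n ih =>
    rw [Function.iterate_succ_apply,
      show delta (fun _ => (0:ℤ)) = fun _ => 0 from by funext y; simp [delta], ih]

lemma general_rule (m n : ℕ) (f : Fin m → ℕ → ℤ) (x : ℕ) :
    delta^[n] (fun y => ∏ i : Fin m, f i y) x =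
      ∑ a ∈ Finset.Nat.antidiagonalTuple m n,
        (Nat.multinomial Finset.univ a : ℤ) *
          ∏ i : Fin m,
            delta^[a i] (shift^[∑ j ∈ Finset.univ.filter (fun j => i < j), a j] (f i)) x := by
  induction m generalizing n x with
  | zero =>
    rw [show (fun y => ∏ i : Fin 0, f i y) = fun _ => (1:ℤ) from by funext y; simp]
    cases n with
    | zero => simp
    | succ n =>
      rw [Function.iterate_succ_apply,
        show delta (fun _ => (1:ℤ)) = fun _ => 0 from by funext y; simp [delta],
        delta_iter_zero]
      simp
  | succ m ih =>
    rw [show (fun y => ∏ i : Fin (m+1), f i y) = fun y => f 0 y * ∏ j : Fin m, f j.succ y from by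
      funext y; rw [Fin.prod_univ_succ]]
    rw [leibniz, sum_AT_succ]
    refine Finset.sum_congr rfl fun k hk => ?_
    simp only [Finset.mem_range] at hk
    rw [ih k (fun j => f j.succ) x, Finset.mul_sum]
    refine Finset.sum_congr rfl fun b hb => ?_
    rw [Finset.Nat.mem_antidiagonalTuple] at hb
    rw [Fin.prod_univ_succ]
    simp only [Fin.cons_zero, Fin.cons_succ]
    rw [multinomial_fin_cons, filter_sum_zero]
    simp only [filter_sum_succ]
    rw [hb, Nat.sub_add_cancel (by omega), Nat.choose_symm (by omega)]
    push_cast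
    ring

/-- The product rule for finite differences, for `m` functions and, in particular,
for two functions. -/
theorem delta_product_rule :
    (∀ (m n : ℕ) (f : Fin m → ℕ → ℤ) (x : ℕ),
      delta^[n] (fun y => ∏ i : Fin m, f i y) x =
        ∑ a ∈ Finset.Nat.antidiagonalTuple m n,
          (Nat.multinomial Finset.univ a : ℤ) *
            ∏ i : Fin m,
              delta^[a i] (shift^[∑ j ∈ Finset.univ.filter (fun j => i < j), a j] (f i)) x) ∧
    (∀ (n : ℕ) (f g : ℕ → ℤ) (x : ℕ),
      delta^[n] (fun y => f y * g y) x =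
        ∑ k ∈ Finset.range (n + 1),
          (n.choose k : ℤ) * delta^[n - k] (shift^[k] f) x * delta^[k] g x) :=
  ⟨general_rule, leibniz⟩
end

section
/- Let F denote the set of functions f : ℕ → ℤ such that 2ⁿ ∣ (Δⁿf)(x) for all n ≥ 0 and all x ≥ 0. Then F is closed under the following operations: (i) the shift f ↦ Sf; (ii) the pointwise product (f, g) ↦ f·g; (iii) the operation (f, g) ↦ ⟨f, g⟩, where moreover for f, g ∈ F the integer f(x+1)g(x) + f(x)g(x+1) is even for every x, so ⟨f, g⟩ is a well-defined integer-valued function, and ⟨f, g⟩ ∈ F. -/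
/-- Membership in the set `F` of functions `f : ℕ → ℤ` with `2^n ∣ (Δ^n f)(x)`
for all `n ≥ 0` and all `x ≥ 0`. -/
def memF (f : ℕ → ℤ) : Prop := ∀ (n : ℕ) (x : ℕ), (2 : ℤ) ^ n ∣ (delta^[n] f) x

lemma delta_add (a b : ℕ → ℤ) :
    delta (fun x => a x + b x) = fun x => delta a x + delta b x := by
  funext x; simp [delta]; ring

lemma iter_add (n : ℕ) (a b : ℕ → ℤ) :
    delta^[n] (fun x => a x + b x) = fun x => delta^[n] a x + delta^[n] b x := by
  induction n generalizing a b with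
  | zero => rfl
  | succ n ih =>
      rw [Function.iterate_succ_apply, delta_add, ih,
        Function.iterate_succ_apply, Function.iterate_succ_apply]

lemma delta_smul (c : ℤ) (a : ℕ → ℤ) :
    delta (fun x => c * a x) = fun x => c * delta a x := by
  funext x; simp [delta]; ring

lemma iter_smul (n : ℕ) (c : ℤ) (a : ℕ → ℤ) :
    delta^[n] (fun x => c * a x) = fun x => c * delta^[n] a x := by
  induction n generalizing a with
  | zero => rfl
  | succ n ih =>
      rw [Function.iterate_succ_apply, delta_smul, ih, Function.iterate_succ_apply]

lemma iter_shift (n : ℕ) (f : ℕ → ℤ) :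
    delta^[n] (shift f) = shift (delta^[n] f) := by
  induction n generalizing f with
  | zero => rfl
  | succ n ih =>
      rw [Function.iterate_succ_apply, show delta (shift f) = shift (delta f) from rfl,
        ih, Function.iterate_succ_apply]

lemma memF_shift {f : ℕ → ℤ} (hf : memF f) : memF (shift f) := by
  intro n x
  rw [iter_shift]
  exact hf n (x + 1)

lemma memF_add {a b : ℕ → ℤ} (ha : memF a) (hb : memF b) :
    memF (fun x => a x + b x) := by
  intro n x
  rw [iter_add]
  exact dvd_add (ha n x) (hb n x)

lemma memF_smul (c : ℤ) {a : ℕ → ℤ} (ha : memF a) :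
    memF (fun x => c * a x) := by
  intro n x
  rw [iter_smul]
  exact (ha n x).mul_left c

/-- If `f ∈ F`, then `Δf/2` is integer-valued and belongs to `F`. -/
lemma memF_half_delta {f : ℕ → ℤ} (hf : memF f) :
    (∀ x, 2 * (delta f x / 2) = delta f x) ∧ memF (fun x => delta f x / 2) := by
  have h2 : ∀ x, 2 * (delta f x / 2) = delta f x := by
    intro x
    have := hf 1 x
    simp only [pow_one, Function.iterate_one] at this
    exact Int.mul_ediv_cancel' this
  refine ⟨h2, ?_⟩
  intro n x
  have key : delta^[n] (fun x => 2 * (delta f x / 2)) x = delta^[n + 1] f x := by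
    have : (fun x => 2 * (delta f x / 2)) = delta f := funext h2
    rw [this, Function.iterate_succ_apply]
  rw [iter_smul] at key
  have key2 : 2 * delta^[n] (fun x => delta f x / 2) x = delta^[n + 1] f x := key
  have hd : (2 : ℤ) ^ (n + 1) ∣ 2 * delta^[n] (fun x => delta f x / 2) x := by
    rw [key2]; exact hf (n + 1) x
  rw [pow_succ, mul_comm ((2:ℤ)^n) 2] at hd
  exact (mul_dvd_mul_iff_left (by norm_num : (2:ℤ) ≠ 0)).mp hd

lemma memF_mul {f g : ℕ → ℤ} (hf : memF f) (hg : memF g) :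
    memF (fun x => f x * g x) := by
  intro n
  induction n generalizing f g with
  | zero => intro x; simp
  | succ n ih =>
      intro x
      obtain ⟨hu2, hu⟩ := memF_half_delta hf
      obtain ⟨hv2, hv⟩ := memF_half_delta hg
      have hkey : delta (fun x => f x * g x)
          = fun x => 2 * (shift f x * (delta g x / 2) + (delta f x / 2) * g x) := by
        funext x
        have e1 := hu2 x
        have e2 := hv2 x
        simp only [delta, shift] at *
        linear_combination -f (x + 1) * e2 - g x * e1
      rw [Function.iterate_succ_apply, hkey, iter_smul, pow_succ, mul_comm ((2:ℤ)^n) 2]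
      exact mul_dvd_mul_left 2 (by
        rw [iter_add]
        exact dvd_add (ih (memF_shift hf) hv x) (ih hu hg x))

/-- `F` is closed under the shift, pointwise products, and the symmetrized
operation `⟨f, g⟩(x) = (f(x+1)g(x) + f(x)g(x+1))/2`, which is integer-valued
on `F` since the numerator is always even. -/
theorem F_closure :
    (∀ f : ℕ → ℤ, memF f → memF (shift f)) ∧
    (∀ f g : ℕ → ℤ, memF f → memF g → memF (fun x => f x * g x)) ∧
    (∀ f g : ℕ → ℤ, memF f → memF g →
      (∀ x : ℕ, (2 : ℤ) ∣ (f (x + 1) * g x + f x * g (x + 1))) ∧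
      memF (fun x => (f (x + 1) * g x + f x * g (x + 1)) / 2)) := by
  refine ⟨fun f hf => memF_shift hf, fun f g hf hg => memF_mul hf hg, ?_⟩
  intro f g hf hg
  obtain ⟨hu2, hu⟩ := memF_half_delta hf
  obtain ⟨hv2, hv⟩ := memF_half_delta hg
  have hfg : memF (fun x => f x * g x) := memF_mul hf hg
  obtain ⟨hw2, hw⟩ := memF_half_delta hfg
  -- identity: N x = 2*(f x * g x) + Δ(fg) x - Δf x * Δg x
  have hN : ∀ x, f (x + 1) * g x + f x * g (x + 1)
      = 2 * (f x * g x + delta (fun x => f x * g x) x / 2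
          + (-2) * ((delta f x / 2) * (delta g x / 2))) := by
    intro x
    have e1 := hu2 x
    have e2 := hv2 x
    have e3 := hw2 x
    simp only [delta] at *
    linear_combination (2 * ((g (x + 1) - g x) / 2)) * e1 + (f (x + 1) - f x) * e2 - e3
  have hdvd : ∀ x : ℕ, (2 : ℤ) ∣ (f (x + 1) * g x + f x * g (x + 1)) := by
    intro x; rw [hN x]; exact Dvd.intro _ rfl
  refine ⟨hdvd, ?_⟩
  have heq : (fun x => (f (x + 1) * g x + f x * g (x + 1)) / 2)
      = fun x => f x * g x + delta (fun x => f x * g x) x / 2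
          + (-2) * ((delta f x / 2) * (delta g x / 2)) := by
    funext x
    rw [hN x]
    exact Int.mul_ediv_cancel_left _ (by norm_num)
  rw [heq]
  exact memF_add (memF_add hfg hw) (memF_smul (-2) (memF_mul hu hv))
end

section
/- Let F denote the set of functions f : ℕ → ℤ such that 2ⁿ ∣ (Δⁿf)(x) for all n ≥ 0 and all x ≥ 0, and let b, g, h ∈ F. Define r(x) = b(x) · ⟨g, h⟩(x) (which lies in F). Then for every m ≥ 0, ε_m^r ≡ Σ_{i+j+k=m} (m!/(i!j!k!)) · ε_k^b · (ε_i^g ε_j^h + ε_{i+1}^g ε_j^h + ε_i^g ε_{j+1}^h) (mod 2), where the sum is over all triples of nonnegative integers i, j, k with i + j + k = m. -/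
/-- For `f ∈ F`, `eps f n` is the element of `{0, 1}` with
`(Δ^n f)(x) ≡ eps f n · 2^n (mod 2^(n+1))` for all `x` (the value is independent
of `x`; we read it off at `x = 0`). -/
def eps (f : ℕ → ℤ) (n : ℕ) : ℤ := ((delta^[n] f) 0 / 2 ^ n) % 2

/-!
For `f ∈ F` write `(Δⁿ f)(x) = 2ⁿ c` with `c ≡ ε_n^f (mod 2)`, and track such parity sequences
at an arbitrary extra scale `2^s`. They are additive, doubling raises the scale by one, `Δ f`
carries the sequence of `f` shifted by one at one extra factor `2`, and by the Leibniz rule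
`Δⁿ(uv)(x) = ∑ C(n,i) Δⁱu(x+j) Δʲv(x)` the sequence of a product is the binomial convolution of
the two sequences, the scales adding. Since `g(x+1)h(x) + g(x)h(x+1) = 2gh + Δg·h + g·Δh`, every
term of the numerator of `⟨g, h⟩` sits at scale `1`; halving it gives the sequence of `⟨g, h⟩`,
and one more convolution with `b`, regrouped as a trinomial sum, gives the formula.
-/

open Finset

lemma delta_eq_fwdDiff : delta = fwdDiff 1 := rfl

lemma iterate_delta_succ_apply (f : ℕ → ℤ) (n x : ℕ) :
    delta^[n + 1] f x = delta^[n] f (x + 1) - delta^[n] f x := by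
  rw [Function.iterate_succ_apply']; rfl

lemma iterate_delta_apply_add_one (f : ℕ → ℤ) (n x : ℕ) :
    delta^[n] f (x + 1) = delta^[n] f x + delta^[n + 1] f x := by
  rw [iterate_delta_succ_apply]; ring

theorem iterate_delta_mul (u v : ℕ → ℤ) (n x : ℕ) :
    delta^[n] (u * v) x =
      ∑ p ∈ antidiagonal n, (n.choose p.1 : ℤ) * delta^[p.1] u (x + p.2) * delta^[p.2] v x := by
  induction n generalizing x with
  | zero => simp
  | succ n ih =>
    simp only [mul_assoc]
    rw [iterate_delta_succ_apply, ih, ih, ← sum_sub_distrib,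
      sum_antidiagonal_choose_succ_mul (fun i j => delta^[i] u (x + j) * delta^[j] v x),
      ← sum_add_distrib]
    refine sum_congr rfl fun p hp => ?_
    rw [Nat.choose_symm_of_eq_add (mem_antidiagonal.1 hp).symm, add_right_comm,
      iterate_delta_apply_add_one, iterate_delta_apply_add_one, ← add_assoc,
      iterate_delta_apply_add_one]
    ring

/-- `e n` is the parity of `(Δⁿ f)(x) / 2^(n+s)`, required to be independent of `x`;
for `f ∈ F` and `s = 0` it is `ε_n^f`. -/
def HasEps (s : ℕ) (f : ℕ → ℤ) (e : ℕ → ℤ) : Prop :=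
  ∀ n x, ∃ c, delta^[n] f x = 2 ^ (n + s) * c ∧ c ≡ e n [ZMOD 2]

def binomConv (e e' : ℕ → ℤ) (n : ℕ) : ℤ :=
  ∑ p ∈ antidiagonal n, (n.choose p.1 : ℤ) * e p.1 * e' p.2

namespace HasEps

variable {s t : ℕ} {f f' : ℕ → ℤ} {e e' : ℕ → ℤ}

lemma add (hf : HasEps s f e) (hf' : HasEps s f' e') : HasEps s (f + f') (e + e') := by
  intro n x
  obtain ⟨c, hc, hce⟩ := hf n x
  obtain ⟨c', hc', hce'⟩ := hf' n x
  refine ⟨c + c', ?_, hce.add hce'⟩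
  rw [delta_eq_fwdDiff, fwdDiff_iter_add, Pi.add_apply, ← delta_eq_fwdDiff, hc, hc']
  ring

lemma two_smul (hf : HasEps s f e) : HasEps (s + 1) ((2 : ℤ) • f) e := by
  intro n x
  obtain ⟨c, hc, hce⟩ := hf n x
  refine ⟨c, ?_, hce⟩
  rw [delta_eq_fwdDiff, fwdDiff_iter_const_smul, Pi.smul_apply, ← delta_eq_fwdDiff, hc,
    smul_eq_mul]
  ring

lemma half (hf : HasEps (s + 1) f e) : HasEps s (fun x => f x / 2) e := by
  have hdouble : f = (2 : ℤ) • fun x => f x / 2 := by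
    funext x
    obtain ⟨c, hc, -⟩ := hf 0 x
    rw [Pi.smul_apply, smul_eq_mul, Int.mul_ediv_cancel']
    exact ⟨2 ^ s * c, by rw [show f x = _ from hc]; ring⟩
  intro n x
  obtain ⟨c, hc, hce⟩ := hf n x
  refine ⟨c, mul_left_cancel₀ two_ne_zero ?_, hce⟩
  rw [hdouble, delta_eq_fwdDiff, fwdDiff_iter_const_smul, Pi.smul_apply, ← delta_eq_fwdDiff,
    smul_eq_mul] at hc
  rw [hc]
  ring

lemma diff (hf : HasEps s f e) : HasEps (s + 1) (delta f) (fun n => e (n + 1)) := by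
  intro n x
  obtain ⟨c, hc, hce⟩ := hf (n + 1) x
  refine ⟨c, ?_, hce⟩
  rw [← Function.iterate_succ_apply, hc]
  ring_nf

lemma mul (hf : HasEps s f e) (hf' : HasEps t f' e') :
    HasEps (s + t) (f * f') (binomConv e e') := by
  choose c hc hce using hf
  choose c' hc' hce' using hf'
  intro n x
  refine ⟨∑ p ∈ antidiagonal n, (n.choose p.1 : ℤ) * c p.1 (x + p.2) * c' p.2 x, ?_, ?_⟩
  · rw [iterate_delta_mul, mul_sum]
    refine sum_congr rfl fun p hp => ?_
    rw [hc, hc', ← mem_antidiagonal.1 hp]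
    ring
  · exact Int.ModEq.sum fun p _ => ((hce _ _).mul_left _).mul (hce' _ _)

end HasEps

lemma memF.iterate_delta_modEq {f : ℕ → ℤ} (hf : memF f) (n x : ℕ) :
    delta^[n] f x ≡ delta^[n] f 0 [ZMOD 2 ^ (n + 1)] := by
  induction x with
  | zero => rfl
  | succ x ih =>
    refine Int.ModEq.trans ?_ ih
    rw [Int.modEq_comm, Int.modEq_iff_dvd, ← iterate_delta_succ_apply]
    exact hf (n + 1) x

lemma memF.hasEps {f : ℕ → ℤ} (hf : memF f) : HasEps 0 f (eps f) := by
  intro n x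
  obtain ⟨c, hc⟩ := hf n x
  obtain ⟨c₀, hc₀⟩ := hf n 0
  refine ⟨c, hc, ?_⟩
  have hmod := hf.iterate_delta_modEq n x
  rw [hc, hc₀, pow_succ, Int.modEq_iff_dvd, ← mul_sub,
    mul_dvd_mul_iff_left (pow_ne_zero n two_ne_zero), ← Int.modEq_iff_dvd] at hmod
  rw [eps, hc₀, Int.mul_ediv_cancel_left _ (pow_ne_zero n two_ne_zero)]
  exact hmod.trans (Int.mod_modEq c₀ 2).symm

lemma HasEps.eps_modEq {f e : ℕ → ℤ} (hf : HasEps 0 f e) (n : ℕ) : eps f n ≡ e n [ZMOD 2] := by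
  obtain ⟨c, hc, hce⟩ := hf n 0
  rw [eps, hc, add_zero, Int.mul_ediv_cancel_left _ (pow_ne_zero _ two_ne_zero)]
  exact (Int.mod_modEq c 2).trans hce

lemma HasEps.pairing {g h eg eh : ℕ → ℤ} (hg : HasEps 0 g eg) (hh : HasEps 0 h eh) :
    HasEps 1 (fun x => g (x + 1) * h x + g x * h (x + 1)) fun l =>
      ∑ q ∈ antidiagonal l, (l.choose q.1 : ℤ) *
        (eg q.1 * eh q.2 + eg (q.1 + 1) * eh q.2 + eg q.1 * eh (q.2 + 1)) := by
  have hq : (fun x => g (x + 1) * h x + g x * h (x + 1)) =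
      (2 : ℤ) • (g * h) + delta g * h + g * delta h := by
    funext x
    simp only [Pi.add_apply, Pi.mul_apply, Pi.smul_apply, smul_eq_mul, delta]
    ring
  have hsum := ((hg.mul hh).two_smul.add (hg.diff.mul hh)).add (hg.mul hh.diff)
  rw [hq]
  convert hsum using 1
  funext l
  simp only [binomConv, Pi.add_apply, ← sum_add_distrib]
  exact sum_congr rfl fun q _ => by ring

lemma multinomial_fin_three (a : Fin 3 → ℕ) :
    Nat.multinomial univ a = (a 2 + (a 0 + a 1)).choose (a 2) * (a 0 + a 1).choose (a 0) := by
  have huniv : (univ : Finset (Fin 3)) = insert 2 (insert 0 {1}) := by decide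
  rw [huniv, Nat.multinomial_insert (by decide), Nat.multinomial_insert (by decide),
    Nat.multinomial_singleton, sum_insert (by decide), sum_singleton, mul_one]

lemma binomConv_eq_sum_antidiagonalTuple (e : ℕ → ℤ) (T : ℕ → ℕ → ℤ) (m : ℕ) :
    binomConv e (fun l => ∑ q ∈ antidiagonal l, (l.choose q.1 : ℤ) * T q.1 q.2) m =
      ∑ a ∈ Nat.antidiagonalTuple 3 m, (Nat.multinomial univ a : ℤ) * e (a 2) * T (a 0) (a 1) := by
  simp only [binomConv, mul_sum]
  rw [sum_sigma']
  refine sum_nbij' (fun x => ![x.2.1, x.2.2, x.1.1]) (fun a => ⟨(a 2, a 0 + a 1), (a 0, a 1)⟩)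
    ?_ ?_ ?_ ?_ ?_
  · rintro ⟨⟨k, l⟩, ⟨i, j⟩⟩ hx
    simp only [mem_sigma, HasAntidiagonal.mem_antidiagonal] at hx
    simp only [Nat.mem_antidiagonalTuple, Fin.sum_univ_three, Matrix.cons_val_zero,
      Matrix.cons_val_one, Matrix.cons_val]
    omega
  · intro a ha
    simp only [Nat.mem_antidiagonalTuple, Fin.sum_univ_three, mem_sigma,
      HasAntidiagonal.mem_antidiagonal, and_true] at ha ⊢
    omega
  · rintro ⟨⟨k, l⟩, ⟨i, j⟩⟩ hx
    simp only [mem_sigma, HasAntidiagonal.mem_antidiagonal] at hx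
    simp [hx.2]
  · intro a _
    funext x
    fin_cases x <;> rfl
  · rintro ⟨⟨k, l⟩, ⟨i, j⟩⟩ hx
    obtain ⟨rfl, rfl⟩ : k + l = m ∧ i + j = l := by
      simpa only [mem_sigma, HasAntidiagonal.mem_antidiagonal] using hx
    simp only [multinomial_fin_three, Matrix.cons_val_zero, Matrix.cons_val_one,
      Matrix.cons_val_two, Matrix.head_cons, Matrix.tail_cons]
    push_cast
    ring

/-- The recursion for `ε_m` of `r(x) = b(x) · ⟨g, h⟩(x)`:
`ε_m^r ≡ ∑_{i+j+k=m} multinomial(m; i,j,k) · ε_k^b ·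
  (ε_i^g ε_j^h + ε_{i+1}^g ε_j^h + ε_i^g ε_{j+1}^h) (mod 2)`. -/
theorem epsilon_recursion
    (b g h : ℕ → ℤ) (hb : memF b) (hg : memF g) (hh : memF h)
    (r : ℕ → ℤ)
    (hr : ∀ x : ℕ, r x = b x * ((g (x + 1) * h x + g x * h (x + 1)) / 2))
    (m : ℕ) :
    eps r m ≡
      ∑ a ∈ Finset.Nat.antidiagonalTuple 3 m,
        (Nat.multinomial Finset.univ a : ℤ) * eps b (a 2) *
          (eps g (a 0) * eps h (a 1) + eps g (a 0 + 1) * eps h (a 1) +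
            eps g (a 0) * eps h (a 1 + 1)) [ZMOD 2] := by
  rw [funext hr]
  refine ((hb.hasEps.mul (hg.hasEps.pairing hh.hasEps).half).eps_modEq m).trans ?_
  rw [binomConv_eq_sum_antidiagonalTuple (eps b)
    (fun i j => eps g i * eps h j + eps g (i + 1) * eps h j + eps g i * eps h (j + 1))]
end

section
/- Let q be a positive integer and let i₁, …, i_q be nonnegative integers, not all zero. Let j₁, …, j_t be the distinct values among i₁, …, i_q, appearing with multiplicities k₁, …, k_t (so k₁ + ⋯ + k_t = q). Then q divides the product of multinomial coefficients ((i₁+⋯+i_q)!/(i₁!⋯i_q!)) · (q!/(k₁!⋯k_t!)). -/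
/-!
Write `n = i₁ + ⋯ + i_q`, `M₁`, `M₂` for the two multinomials, `e = gcd (i₁, …, i_q)` and
`d = gcd (k₁, …, k_t)`. From `k · C(N, k) = N · C(N - 1, k - 1)`, a sum of parts divides each part
times the multinomial, hence also the gcd of the parts times it: `n ∣ e · M₁` and `q ∣ d · M₂`.
Since `n = k₁ j₁ + ⋯ + k_t j_t`, `d · e ∣ n`; so `q · d · e ∣ q · n ∣ d · e · M₁ · M₂`, and
`d · e ≠ 0` because the `i`'s are not all zero.
-/

open Finset

theorem Nat.dvd_choose_mul (n k : ℕ) : n ∣ n.choose k * k := by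
  rcases k with _ | k
  · simp
  rcases n with _ | n
  · simp
  exact ⟨_, (add_one_mul_choose_eq n k).symm⟩

namespace Nat

variable {α : Type*} {s : Finset α} {f : α → ℕ}

theorem sum_dvd_mul_multinomial {a : α} (ha : a ∈ s) :
    (∑ x ∈ s, f x) ∣ f a * multinomial s f := by
  classical
  rw [← insert_erase ha, multinomial_insert (notMem_erase a s), sum_insert (notMem_erase a s),
    ← mul_assoc, mul_comm (f a)]
  exact dvd_mul_of_dvd_left (dvd_choose_mul _ _) _

theorem sum_dvd_gcd_mul_multinomial (s : Finset α) (f : α → ℕ) :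
    (∑ x ∈ s, f x) ∣ s.gcd f * multinomial s f := by
  rw [← normalize_eq (multinomial s f), ← Finset.gcd_mul_right]
  exact Finset.dvd_gcd fun a ha => sum_dvd_mul_multinomial ha

end Nat

namespace Finset

variable {α : Type*} (s : Finset α) (f : α → ℕ)

theorem gcd_fiber_card_mul_gcd_dvd_sum :
    (s.image f).gcd (fun v => #{x ∈ s | f x = v}) * s.gcd f ∣ ∑ x ∈ s, f x := by
  rw [sum_comp (fun v => v) f]
  refine dvd_sum fun v hv => mul_dvd_mul (gcd_dvd hv) ?_
  obtain ⟨a, ha, rfl⟩ := mem_image.1 hv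
  exact gcd_dvd ha

theorem card_dvd_multinomial_mul_multinomial_fiber_card (h : ∃ a ∈ s, f a ≠ 0) :
    #s ∣ Nat.multinomial s f * Nat.multinomial (s.image f) (fun v => #{x ∈ s | f x = v}) := by
  set k := fun v => #{x ∈ s | f x = v}
  obtain ⟨a, ha, hfa⟩ := h
  have he : s.gcd f ≠ 0 := fun he => hfa (gcd_eq_zero_iff.1 he a ha)
  have hd : (s.image f).gcd k ≠ 0 := fun hd =>
    (card_pos.2 ⟨a, mem_filter.2 ⟨ha, rfl⟩⟩ : 0 < k (f a)).ne'
      (gcd_eq_zero_iff.1 hd (f a) (mem_image_of_mem f ha))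
  have hcard := Nat.sum_dvd_gcd_mul_multinomial (s.image f) k
  rw [← card_eq_sum_card_image] at hcard
  refine Nat.dvd_of_mul_dvd_mul_right (Nat.pos_of_ne_zero (mul_ne_zero hd he)) ?_
  calc #s * ((s.image f).gcd k * s.gcd f)
      ∣ #s * ∑ x ∈ s, f x := mul_dvd_mul_left _ (gcd_fiber_card_mul_gcd_dvd_sum s f)
    _ ∣ ((s.image f).gcd k * Nat.multinomial (s.image f) k) * (s.gcd f * Nat.multinomial s f) :=
        mul_dvd_mul hcard (Nat.sum_dvd_gcd_mul_multinomial s f)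
    _ = Nat.multinomial s f * Nat.multinomial (s.image f) k * ((s.image f).gcd k * s.gcd f) := by
        ring

end Finset

theorem q_dvd_multinomial_product_general
    (q : ℕ) (i : Fin q → ℕ) (h : ∃ m, i m ≠ 0) :
    q ∣ Nat.multinomial Finset.univ i *
        Nat.multinomial (Finset.image i Finset.univ)
          (fun v => (Finset.univ.filter (fun m => i m = v)).card) := by
  simpa using card_dvd_multinomial_mul_multinomial_fiber_card Finset.univ i (by simpa using h)

/-- If `i₁, …, i_q` are nonnegative integers, not all zero, with distinct values
appearing with multiplicities `k₁, …, k_t`, then `q` divides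
`((i₁+⋯+i_q)!/(i₁!⋯i_q!)) · (q!/(k₁!⋯k_t!))`. -/
theorem q_dvd_multinomial_product
    (q : ℕ) (hq : 0 < q) (i : Fin q → ℕ) (h : ∃ m, i m ≠ 0) :
    q ∣ Nat.multinomial Finset.univ i *
        Nat.multinomial (Finset.image i Finset.univ)
          (fun v => (Finset.univ.filter (fun m => i m = v)).card) :=
  q_dvd_multinomial_product_general q i h
end

section
/- Let n ≥ 0 and let b(0), b(1), …, b(n) be integers. In the field ℚ(X) of rational functions, define g_n = 1/(1 − b(n)X) and g_j = 1/(1 − b(j)·X·g_{j+1}) for 0 ≤ j < n (all denominators are nonzero rational functions). Then g_0 = P(X)/Q(X), where P(X) = 1 + Σ_{k≥1} (Σ_{(i₁,…,i_k)∈S_k(1,n)} b(i₁)⋯b(i_k)) (−X)^k and Q(X) = 1 + Σ_{k≥1} (Σ_{(i₁,…,i_k)∈S_k(0,n)} b(i₁)⋯b(i_k)) (−X)^k. -/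
noncomputable def qp (b : ℕ → ℤ) (n j : ℕ) : Polynomial ℚ :=
  ∑ T ∈ (Finset.Icc j n).powerset.filter
      (fun T => ∀ a ∈ T, ∀ c ∈ T, a < c → a + 2 ≤ c),
    (∏ i ∈ T, (b i : Polynomial ℚ)) * (-Polynomial.X) ^ T.card

lemma qp_of_gt (b : ℕ → ℤ) (n j : ℕ) (h : n < j) : qp b n j = 1 := by
  unfold qp
  rw [Finset.Icc_eq_empty (by omega)]
  rw [Finset.powerset_empty, Finset.filter_singleton]
  simp

lemma qp_ne_zero (b : ℕ → ℤ) (n j : ℕ) : qp b n j ≠ 0 := by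
  have h1 : Polynomial.eval 0 (qp b n j) = 1 := by
    rw [qp, Polynomial.eval_finset_sum]
    rw [Finset.sum_eq_single ∅]
    · simp
    · intro T hT hne
      have hc : T.card ≠ 0 := by simpa [Finset.card_eq_zero] using hne
      simp [zero_pow hc]
    · intro h
      exact absurd (by simp : (∅ : Finset ℕ) ∈ _) h
  intro hq
  rw [hq] at h1
  simp at h1

lemma qp_rec (b : ℕ → ℤ) (n j : ℕ) (h : j ≤ n) :
    qp b n j = qp b n (j+1) + (b j : Polynomial ℚ) * (-Polynomial.X) * qp b n (j+2) := by
  classical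
  set f : Finset ℕ → Polynomial ℚ :=
    fun T => (∏ i ∈ T, (b i : Polynomial ℚ)) * (-Polynomial.X) ^ T.card with hf
  set S : ℕ → Finset (Finset ℕ) := fun u => (Finset.Icc u n).powerset.filter
      (fun T => ∀ a ∈ T, ∀ c ∈ T, a < c → a + 2 ≤ c) with hS
  have hsplit := Finset.sum_filter_add_sum_filter_not (S j) (fun T => j ∈ T) f
  have hA : (S j).filter (fun T => ¬ j ∈ T) = S (j+1) := by
    ext T
    simp only [hS, Finset.mem_filter, Finset.mem_powerset]
    constructor
    · rintro ⟨⟨hsub, hsp⟩, hj⟩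
      refine ⟨fun x hx => ?_, hsp⟩
      have := hsub hx
      simp only [Finset.mem_Icc] at this ⊢
      have : j ≤ x ∧ x ≤ n := this
      refine ⟨?_, this.2⟩
      rcases Nat.lt_or_ge j x with h' | h'
      · omega
      · have : x = j := by omega
        subst this; exact absurd hx hj
    · rintro ⟨hsub, hsp⟩
      refine ⟨⟨fun x hx => ?_, hsp⟩, fun hj => ?_⟩
      · have := hsub hx
        simp only [Finset.mem_Icc] at this ⊢
        omega
      · have := hsub hj
        simp at this
  have hB : (S j).filter (fun T => j ∈ T) = (S (j+2)).image (insert j) := by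
    ext T
    simp only [hS, Finset.mem_filter, Finset.mem_powerset, Finset.mem_image]
    constructor
    · rintro ⟨⟨hsub, hsp⟩, hj⟩
      refine ⟨T.erase j, ⟨fun x hx => ?_, ?_⟩, ?_⟩
      · have hxT := Finset.mem_of_mem_erase hx
        have hxne := Finset.ne_of_mem_erase hx
        have h1 := hsub hxT
        simp only [Finset.mem_Icc] at h1 ⊢
        have : j < x := by omega
        exact ⟨hsp j hj x hxT this, h1.2⟩
      · intro a ha c hc hac
        exact hsp a (Finset.mem_of_mem_erase ha) c (Finset.mem_of_mem_erase hc) hac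
      · exact Finset.insert_erase hj
    · rintro ⟨T', ⟨hsub, hsp⟩, rfl⟩
      have hjT' : j ∉ T' := by
        intro hj
        have := hsub hj
        simp only [Finset.mem_Icc] at this
        omega
      refine ⟨⟨fun x hx => ?_, ?_⟩, Finset.mem_insert_self _ _⟩
      · rcases Finset.mem_insert.1 hx with rfl | hx
        · simp only [Finset.mem_Icc]; omega
        · have := hsub hx
          simp only [Finset.mem_Icc] at this ⊢
          omega
      · intro a ha c hc hac
        rcases Finset.mem_insert.1 ha with ha' | ha'
        · rcases Finset.mem_insert.1 hc with hc' | hc'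
          · omega
          · have := hsub hc'
            simp only [Finset.mem_Icc] at this
            omega
        · rcases Finset.mem_insert.1 hc with hc' | hc'
          · have := hsub ha'
            simp only [Finset.mem_Icc] at this
            omega
          · exact hsp a ha' c hc' hac
  have hinj : ∀ T1 ∈ S (j+2), ∀ T2 ∈ S (j+2), insert j T1 = insert j T2 → T1 = T2 := by
    intro T1 h1 T2 h2 heq
    have hj1 : j ∉ T1 := by
      simp only [hS, Finset.mem_filter, Finset.mem_powerset] at h1
      intro hj; have := h1.1 hj; simp only [Finset.mem_Icc] at this; omega
    have hj2 : j ∉ T2 := by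
      simp only [hS, Finset.mem_filter, Finset.mem_powerset] at h2
      intro hj; have := h2.1 hj; simp only [Finset.mem_Icc] at this; omega
    have := congrArg (Finset.erase · j) heq
    simpa [Finset.erase_insert hj1, Finset.erase_insert hj2] using this
  have hBsum : ∑ T ∈ (S j).filter (fun T => j ∈ T), f T
      = ∑ T ∈ S (j+2), f (insert j T) := by
    rw [hB, Finset.sum_image hinj]
  have hterm : ∀ T ∈ S (j+2), f (insert j T)
      = (b j : Polynomial ℚ) * (-Polynomial.X) * f T := by
    intro T hT
    have hjT : j ∉ T := by
      simp only [hS, Finset.mem_filter, Finset.mem_powerset] at hT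
      intro hj; have := hT.1 hj; simp only [Finset.mem_Icc] at this; omega
    simp only [hf, Finset.prod_insert hjT, Finset.card_insert_of_notMem hjT, pow_succ]
    ring
  calc qp b n j = ∑ T ∈ S j, f T := rfl
    _ = ∑ T ∈ (S j).filter (fun T => j ∈ T), f T
        + ∑ T ∈ (S j).filter (fun T => ¬ j ∈ T), f T := hsplit.symm
    _ = ∑ T ∈ S (j+2), f (insert j T) + ∑ T ∈ S (j+1), f T := by rw [hBsum, hA]
    _ = (b j : Polynomial ℚ) * (-Polynomial.X) * qp b n (j+2) + qp b n (j+1) := by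
        rw [Finset.sum_congr rfl hterm, ← Finset.mul_sum]; rfl
    _ = _ := by ring


open RatFunc in
/-- Expansion of the finite continued fraction
`1/(1 − b(0)x/(1 − b(1)x/(⋯/(1 − b(n)x))))` as `P(X)/Q(X)`, where the
coefficients of `P` (resp. `Q`) are signed sums of products `b(i₁)⋯b(i_k)` over
increasing sequences in `[1, n]` (resp. `[0, n]`) with consecutive gaps at
least 2. The sums over all such sequences of a fixed length `k`, weighted by
`(−X)^k`, are here rewritten as a single sum over "sparse" subsets `T` (no two
elements at distance `< 2`), weighted by `(−X)^{|T|}` (the empty set giving the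
constant term 1). -/
theorem continued_fraction_expansion
    (n : ℕ) (b : ℕ → ℤ) (g : ℕ → RatFunc ℚ)
    (hgn : g n = 1 / (1 - (b n : RatFunc ℚ) * RatFunc.X))
    (hgj : ∀ j : ℕ, j < n → g j = 1 / (1 - (b j : RatFunc ℚ) * RatFunc.X * g (j + 1))) :
    g 0 =
      (∑ T ∈ (Finset.Icc 1 n).powerset.filter
          (fun T => ∀ a ∈ T, ∀ c ∈ T, a < c → a + 2 ≤ c),
        (∏ i ∈ T, (b i : RatFunc ℚ)) * (-RatFunc.X) ^ T.card) /
      (∑ T ∈ (Finset.Icc 0 n).powerset.filter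
          (fun T => ∀ a ∈ T, ∀ c ∈ T, a < c → a + 2 ≤ c),
        (∏ i ∈ T, (b i : RatFunc ℚ)) * (-RatFunc.X) ^ T.card) := by
  have halg : ∀ j, (algebraMap (Polynomial ℚ) (RatFunc ℚ)) (qp b n j) =
      ∑ T ∈ (Finset.Icc j n).powerset.filter
          (fun T => ∀ a ∈ T, ∀ c ∈ T, a < c → a + 2 ≤ c),
        (∏ i ∈ T, (b i : RatFunc ℚ)) * (-RatFunc.X) ^ T.card := by
    intro j
    rw [qp, map_sum]
    refine Finset.sum_congr rfl fun T hT => ?_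
    rw [map_mul, map_pow, map_neg, RatFunc.algebraMap_X, map_prod]
    simp
  set Q : ℕ → RatFunc ℚ := fun j => algebraMap (Polynomial ℚ) (RatFunc ℚ) (qp b n j)
    with hQ
  have hQne : ∀ j, Q j ≠ 0 := by
    intro j
    simp only [hQ]
    exact RatFunc.algebraMap_ne_zero (qp_ne_zero b n j)
  have hQrec : ∀ j, j ≤ n → Q j = Q (j+1) + (b j : RatFunc ℚ) * (-RatFunc.X) * Q (j+2) := by
    intro j hj
    simp only [hQ]
    rw [qp_rec b n j hj, map_add, map_mul, map_mul, map_neg, RatFunc.algebraMap_X]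
    simp
  have hQtop : ∀ j, n < j → Q j = 1 := by
    intro j h
    simp [hQ, qp_of_gt b n j h]
  have key : ∀ k j, j ≤ n → n - j = k → g j = Q (j+1) / Q j := by
    intro k
    induction k with
    | zero =>
      intro j hj hk
      have hjn : j = n := by omega
      subst hjn
      rw [hgn, hQtop (j+1) (by omega)]
      have hq : Q j = 1 - (b j : RatFunc ℚ) * RatFunc.X := by
        rw [hQrec j le_rfl, hQtop (j+1) (by omega), hQtop (j+2) (by omega)]
        ring
      rw [hq]
    | succ k ih =>
      intro j hj hk
      have hjn : j < n := by omega
      have hg1 : g (j+1) = Q (j+2) / Q (j+1) := ih (j+1) (by omega) (by omega)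
      rw [hgj j hjn, hg1]
      have hne1 := hQne (j+1)
      have h1 : 1 - (b j : RatFunc ℚ) * RatFunc.X * (Q (j+2) / Q (j+1))
          = Q j / Q (j+1) := by
        rw [hQrec j (le_of_lt hjn)]
        field_simp
        ring
      rw [h1, one_div_div]
  have h0 := key n 0 (Nat.zero_le n) (by omega)
  rw [h0]
  simp only [hQ]
  norm_num
  rw [halg 1, halg 0]
end

section
/- Let m be a positive integer and b : ℕ → ℤ. The sequence of weighted Catalan numbers C_n^b reduced modulo m is eventually periodic (i.e., there exist N ≥ 0 and T > 0 such that C_{n+T}^b ≡ C_n^b (mod m) for all n ≥ N) if and only if there exists a nonnegative integer k such that m divides the product b(0)·b(1)⋯b(k). -/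
/-!
The generating functions `F_x = ∑ₙ W_b(n, x) Xⁿ` satisfy `F_x (1 - b(x) X F_{x+1}) = 1`.

If `m ∣ b(0)⋯b(k)`, then modulo `m` the numbers agree with those of `b` truncated after `k`,
whose generating function is `P / Q` with `Q(0) = 1`. Over the finite ring `ZMod m` its
coefficients then satisfy a linear recurrence, hence are eventually periodic.

Conversely, eventual periodicity gives `Q F_0 ≡ P (mod m)` with `Q(0) = 1`. If `m` divides no
`b(0)⋯b(k)`, some prime power `p^f ∣ m` divides none of them. Solving the functional equation
for `F_{x+1}` turns `Q F_x ≡ P (mod p^f)` into `P F_{x+1} ≡ P' (mod p^(f - v_p(b(x))))` with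
`deg P' < deg (P - Q)`, and the exponent never reaches `0`: the degrees would decrease forever.
-/

/-- `wcat b n x`: `wcat b 0 x = 1` and
`wcat b (n+1) x = b x * ∑_{i+j=n} wcat b i (x+1) * wcat b j x`.
The weighted Catalan number `C_n^b` is `wcat b n 0`. -/
def wcat (b : ℕ → ℤ) : ℕ → ℕ → ℤ
  | 0, _ => 1
  | n + 1, x => b x * ∑ i ∈ (Finset.range (n + 1)).attach,
      wcat b i.1 (x + 1) * wcat b (n - i.1) x
termination_by n _ => n
decreasing_by
  · exact Finset.mem_range.mp i.2
  · exact Nat.lt_succ_of_le (Nat.sub_le n i.1)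

open Finset PowerSeries
open scoped Polynomial

theorem eventually_periodic_of_window_determines_next {α : Type*} [Finite α] {c : ℕ → α}
    {d n₀ : ℕ}
    (h : ∀ i j, n₀ ≤ i → n₀ ≤ j → (∀ t < d, c (i + t) = c (j + t)) → c (i + d) = c (j + d)) :
    ∃ N T, 0 < T ∧ ∀ n, N ≤ n → c (n + T) = c n := by
  obtain ⟨i, j, hij, hw⟩ := Set.finite_univ.exists_lt_map_eq_of_forall_mem
    (f := fun i (t : Fin d) => c (n₀ + i + t)) fun _ => Set.mem_univ _
  have key : ∀ s, c (n₀ + i + s) = c (n₀ + j + s) := by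
    intro s
    induction s using Nat.strong_induction_on with
    | _ s ih =>
    by_cases hs : s < d
    · exact congrFun hw ⟨s, hs⟩
    obtain ⟨s, rfl⟩ : ∃ s', s = s' + d := ⟨s - d, by omega⟩
    simp only [← add_assoc] at ih ⊢
    exact h _ _ (by omega) (by omega) fun t ht => by simpa [add_assoc] using ih (s + t) (by omega)
  refine ⟨n₀ + i, j - i, by omega, fun n hn => ?_⟩
  simpa [show n₀ + i + (n - (n₀ + i)) = n by omega,
    show n₀ + j + (n - (n₀ + i)) = n + (j - i) by omega] using (key (n - (n₀ + i))).symm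

theorem eq_neg_sum_of_polynomial_mul_eq {R : Type*} [CommRing R] {c : ℕ → R} {P Q : R[X]}
    (hQ : Q.coeff 0 = 1) (h : (Q : R⟦X⟧) * mk c = P) {n : ℕ} (hP : P.natDegree < n)
    (hQn : Q.natDegree ≤ n) :
    c n = -∑ a ∈ range Q.natDegree, Q.coeff (a + 1) * c (n - (a + 1)) := by
  have hcoeff := congrArg (coeff n) h
  rw [coeff_mul, Nat.sum_antidiagonal_eq_sum_range_succ_mk, sum_range_succ'] at hcoeff
  simp only [Polynomial.coeff_coe, coeff_mk, hQ, one_mul, Nat.sub_zero,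
    Polynomial.coeff_eq_zero_of_natDegree_lt hP] at hcoeff
  rw [← sum_subset (range_subset_range.2 hQn)] at hcoeff
  · linear_combination hcoeff
  · intro a _ ha
    rw [Polynomial.coeff_eq_zero_of_natDegree_lt (by simp at ha; omega), zero_mul]

theorem eventually_periodic_of_polynomial_mul_eq {R : Type*} [CommRing R] [Finite R]
    {c : ℕ → R} {P Q : R[X]} (hQ : Q.coeff 0 = 1) (h : (Q : R⟦X⟧) * mk c = P) :
    ∃ N T, 0 < T ∧ ∀ n, N ≤ n → c (n + T) = c n := by
  refine eventually_periodic_of_window_determines_next (d := Q.natDegree)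
    (n₀ := P.natDegree + 1) fun i j hi hj hw => ?_
  rw [eq_neg_sum_of_polynomial_mul_eq (n := i + Q.natDegree) hQ h (by omega) (by omega),
    eq_neg_sum_of_polynomial_mul_eq (n := j + Q.natDegree) hQ h (by omega) (by omega)]
  refine congrArg _ (sum_congr rfl fun a ha => ?_)
  have ha := mem_range.1 ha
  rw [show i + Q.natDegree - (a + 1) = i + (Q.natDegree - (a + 1)) by omega,
    show j + Q.natDegree - (a + 1) = j + (Q.natDegree - (a + 1)) by omega, hw _ (by omega)]

theorem eventually_periodic_modEq_of_polynomial_mul_eq {m : ℕ} (hm : m ≠ 0) {c : ℕ → ℤ}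
    {P Q : ℤ[X]} (hQ : Q.coeff 0 = 1) (h : (Q : ℤ⟦X⟧) * mk c = P) :
    ∃ N T, 0 < T ∧ ∀ n, N ≤ n → c (n + T) ≡ c n [ZMOD m] := by
  have : NeZero m := ⟨hm⟩
  have hmap := congrArg (PowerSeries.map (Int.castRingHom (ZMod m))) h
  rw [map_mul, ← Polynomial.polynomial_map_coe, ← Polynomial.polynomial_map_coe] at hmap
  obtain ⟨N, T, hT, hper⟩ := eventually_periodic_of_polynomial_mul_eq
    (c := fun n => (c n : ZMod m)) (Q := Q.map (Int.castRingHom (ZMod m))) (by simp [hQ])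
    (by convert hmap using 2; exact PowerSeries.ext fun n => by simp)
  exact ⟨N, T, hT, fun n hn => (ZMod.intCast_eq_intCast_iff _ _ m).1 (hper n hn)⟩

theorem exists_polynomial_mul_modEq_of_eventually_periodic {c : ℕ → ℤ} {M : ℤ} {N T : ℕ}
    (hT : 0 < T) (h : ∀ n, N ≤ n → c (n + T) ≡ c n [ZMOD M]) :
    ∃ P Q : ℤ[X], Q.coeff 0 = 1 ∧ ∀ n, coeff n ((Q : ℤ⟦X⟧) * mk c) ≡ P.coeff n [ZMOD M] := by
  let Q : ℤ[X] := 1 - Polynomial.X ^ T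
  refine ⟨trunc (N + T) ((Q : ℤ⟦X⟧) * mk c), Q, by simp [Q, hT.ne], fun n => ?_⟩
  rw [coeff_trunc]
  split_ifs with hn
  · rfl
  have hQ : (Q : ℤ⟦X⟧) = 1 - X ^ T := by simp [Q]
  rw [hQ, sub_mul, one_mul, map_sub, coeff_X_pow_mul', if_pos (by omega), coeff_mk, coeff_mk,
    Int.modEq_zero_iff_dvd, ← Int.modEq_iff_dvd]
  simpa [show n - T + T = n by omega] using (h (n - T) (by omega)).symm

theorem coeff_mul_modEq {A B : ℤ⟦X⟧} {M : ℤ} (h : ∀ n, coeff n A ≡ coeff n B [ZMOD M])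
    (D : ℤ⟦X⟧) (n : ℕ) : coeff n (A * D) ≡ coeff n (B * D) [ZMOD M] := by
  simp only [coeff_mul]
  exact Int.ModEq.sum fun x _ => (h x.1).mul_right _

theorem exists_prime_pow_forall_not_dvd {m : ℕ} (hm : m ≠ 0) {a : ℕ → ℤ}
    (ha : ∀ {j k}, j ≤ k → a j ∣ a k) (h : ∀ k, ¬ (m : ℤ) ∣ a k) :
    ∃ p e : ℕ, p.Prime ∧ p ^ e ∣ m ∧ ∀ k, ¬ (p : ℤ) ^ e ∣ a k := by
  by_contra! H
  choose! K hK using H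
  refine h ((range (m + 1) ×ˢ range (m + 1)).sup fun q => K q.1 q.2)
    (Int.natCast_dvd.2 ((Nat.dvd_iff_prime_pow_dvd_dvd _ _).2 fun p e hp hpe => ?_))
  rcases e.eq_zero_or_pos with rfl | he
  · simp
  have hpm : p ^ e ≤ m := Nat.le_of_dvd (Nat.pos_of_ne_zero hm) hpe
  have hp_le : p ≤ m := (Nat.le_self_pow he.ne' p).trans hpm
  have he_le : e ≤ m := (Nat.lt_pow_self hp.one_lt).le.trans hpm
  have hmem : (p, e) ∈ range (m + 1) ×ˢ range (m + 1) :=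
    mem_product.2 ⟨mem_range.2 (by omega), mem_range.2 (by omega)⟩
  have hdvd := (hK p e hp hpe).trans (ha (le_sup (f := fun q => K q.1 q.2) hmem))
  exact Int.natCast_dvd.1 (by exact_mod_cast hdvd)

theorem wcat_zero (b : ℕ → ℤ) (x : ℕ) : wcat b 0 x = 1 := by
  rw [wcat]

theorem wcat_succ (b : ℕ → ℤ) (n x : ℕ) :
    wcat b (n + 1) x = b x * ∑ i ∈ range (n + 1), wcat b i (x + 1) * wcat b (n - i) x := by
  rw [wcat, sum_attach (range (n + 1)) fun i => wcat b i (x + 1) * wcat b (n - i) x]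

theorem wcat_modEq_of_eqOn {b b' : ℕ → ℤ} {x k : ℕ} (h : ∀ i ∈ Ico x k, b i = b' i) (n : ℕ) :
    wcat b n x ≡ wcat b' n x [ZMOD ∏ i ∈ Ico x k, b i] := by
  induction n using Nat.strong_induction_on generalizing x with
  | _ n ih =>
  rcases n with _ | n
  · simp only [wcat_zero, Int.ModEq.refl]
  rcases le_or_gt k x with hkx | hxk
  · simp [Ico_eq_empty_of_le hkx, Int.modEq_one]
  have hIco : ∏ i ∈ Ico x k, b i = b x * ∏ i ∈ Ico (x + 1) k, b i :=
    prod_eq_prod_Ico_succ_bot hxk b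
  have h' : ∀ i ∈ Ico (x + 1) k, b i = b' i := fun i hi =>
    h i (Ico_subset_Ico_left x.le_succ hi)
  rw [wcat_succ, wcat_succ, ← h x (left_mem_Ico.2 hxk), hIco]
  refine Int.ModEq.mul_left' (Int.ModEq.sum fun i hi => Int.ModEq.mul ?_ ?_)
  · exact ih i (mem_range.1 hi) h'
  · exact (hIco ▸ ih (n - i) (by omega) h).of_dvd (dvd_mul_left _ _)

def wcatSeries (b : ℕ → ℤ) (x : ℕ) : ℤ⟦X⟧ :=
  mk fun n => wcat b n x

theorem constantCoeff_wcatSeries (b : ℕ → ℤ) (x : ℕ) : constantCoeff (wcatSeries b x) = 1 := by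
  simp [wcatSeries, wcat_zero]

theorem wcatSeries_mul_one_sub (b : ℕ → ℤ) (x : ℕ) :
    wcatSeries b x * (1 - C (b x) * X * wcatSeries b (x + 1)) = 1 := by
  suffices wcatSeries b x = 1 + X * (C (b x) * (wcatSeries b (x + 1) * wcatSeries b x)) by
    linear_combination this
  ext (_ | n)
  · simp [wcatSeries, wcat_zero]
  · rw [map_add, coeff_succ_X_mul, coeff_C_mul, coeff_mul,
      Nat.sum_antidiagonal_eq_sum_range_succ_mk]
    simp [wcatSeries, wcat_succ]

theorem wcatSeries_eq_one {b : ℕ → ℤ} {x : ℕ} (hb : b x = 0) : wcatSeries b x = 1 := by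
  simpa [hb] using wcatSeries_mul_one_sub b x

theorem exists_polynomial_mul_wcatSeries_eq {b : ℕ → ℤ} {k : ℕ} (hb : ∀ i, k ≤ i → b i = 0)
    (x : ℕ) : ∃ P Q : ℤ[X], Q.coeff 0 = 1 ∧ (Q : ℤ⟦X⟧) * wcatSeries b x = P := by
  suffices ∀ d x, k ≤ x + d → ∃ P Q : ℤ[X], Q.coeff 0 = 1 ∧ (Q : ℤ⟦X⟧) * wcatSeries b x = P from
    this k x (by omega)
  intro d
  induction d with
  | zero =>
    intro x hx
    exact ⟨1, 1, by simp, by simp [wcatSeries_eq_one (hb x hx)]⟩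
  | succ d ih =>
    intro x hx
    obtain ⟨P, Q, hQ, hPQ⟩ := ih (x + 1) (by omega)
    refine ⟨Q, Q - Polynomial.C (b x) * Polynomial.X * P, by simp [hQ], ?_⟩
    push_cast
    linear_combination (Q : ℤ⟦X⟧) * wcatSeries_mul_one_sub b x +
      C (b x) * X * wcatSeries b x * hPQ

theorem not_dvd_coeff_zero_of_mul_wcatSeries_modEq {p : ℤ} {f : ℕ} (hf : f ≠ 0) {b : ℕ → ℤ} {x : ℕ}
    {P Q : ℤ[X]} (hPQ : ∀ n, coeff n ((Q : ℤ⟦X⟧) * wcatSeries b x) ≡ P.coeff n [ZMOD p ^ f])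
    (hQ : ¬ p ∣ Q.coeff 0) : ¬ p ∣ P.coeff 0 := by
  have h0 := (hPQ 0).of_dvd (dvd_pow_self p hf)
  rw [coeff_zero_eq_constantCoeff_apply, map_mul, constantCoeff_wcatSeries, mul_one,
    Polynomial.constantCoeff_coe] at h0
  rwa [← h0.dvd_iff]

theorem exists_modEq_wcatSeries_succ {b : ℕ → ℤ} {x : ℕ} {s r u : ℤ} (hs : s ≠ 0)
    (hbx : b x = s * u) (hru : IsCoprime r u) {P Q : ℤ[X]}
    (hPQ : ∀ n, coeff n ((Q : ℤ⟦X⟧) * wcatSeries b x) ≡ P.coeff n [ZMOD s * r]) :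
    ∃ P' : ℤ[X], (P' ≠ 0 → P'.natDegree < (P - Q).natDegree) ∧
      ∀ n, coeff n ((P : ℤ⟦X⟧) * wcatSeries b (x + 1)) ≡ P'.coeff n [ZMOD r] := by
  set G := (P : ℤ⟦X⟧) * wcatSeries b (x + 1)
  -- multiply `Q F_x ≡ P` by `1 - b_x X F_{x+1}`, the inverse of `F_x`
  have key : ∀ n, (P - Q).divX.coeff n ≡ s * (u * coeff n G) [ZMOD s * r] := by
    intro n
    have h := coeff_mul_modEq (B := P) (fun n => by simpa only [Polynomial.coeff_coe] using hPQ n)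
      (1 - C (b x) * X * wcatSeries b (x + 1)) (n + 1)
    rw [mul_assoc, wcatSeries_mul_one_sub, mul_one, mul_sub, mul_one,
      show (P : ℤ⟦X⟧) * (C (b x) * X * wcatSeries b (x + 1)) = X * (C (b x) * G) by ring,
      map_sub, coeff_succ_X_mul, coeff_C_mul, Polynomial.coeff_coe, Polynomial.coeff_coe] at h
    rw [Polynomial.coeff_divX, Polynomial.coeff_sub, ← mul_assoc, ← hbx]
    simpa using h.sub_left (P.coeff (n + 1))
  obtain ⟨S, hS⟩ := (Polynomial.C_dvd_iff_dvd_coeff s _).2 fun n =>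
    ((key n).of_dvd (dvd_mul_right s r)).dvd_iff.2 (dvd_mul_right _ _)
  obtain ⟨z, w, hzw⟩ := hru.symm
  refine ⟨Polynomial.C z * S, fun hne => ?_, fun n => ?_⟩
  · have hS0 : S ≠ 0 := right_ne_zero_of_mul hne
    have hPQ0 : P - Q ≠ 0 := by
      rintro h0
      rw [h0, Polynomial.divX_zero, eq_comm, mul_eq_zero, Polynomial.C_eq_zero] at hS
      exact hS.elim hs hS0
    refine (Polynomial.natDegree_C_mul_le z S).trans_lt (Polynomial.natDegree_lt_natDegree hS0 ?_)
    rw [← Polynomial.degree_C_mul hs, ← hS]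
    exact Polynomial.degree_divX_lt hPQ0
  · have hSn : S.coeff n ≡ u * coeff n G [ZMOD r] :=
      Int.ModEq.mul_left_cancel' hs (by rw [← Polynomial.coeff_C_mul, ← hS]; exact key n)
    have hG : coeff n G ≡ z * (u * coeff n G) [ZMOD r] :=
      Int.modEq_iff_dvd.2 ⟨-(w * coeff n G), by linear_combination coeff n G * hzw⟩
    rw [Polynomial.coeff_C_mul]
    exact hG.trans (hSn.mul_left z).symm

theorem dvd_coeff_zero_of_modEq_wcatSeries {p : ℕ} (hp : p.Prime) {b : ℕ → ℤ} {x f : ℕ}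
    (hb : ∀ k, ¬ (p : ℤ) ^ f ∣ ∏ i ∈ range k, b (x + i)) {P Q : ℤ[X]}
    (hPQ : ∀ n, coeff n ((Q : ℤ⟦X⟧) * wcatSeries b x) ≡ P.coeff n [ZMOD p ^ f]) :
    (p : ℤ) ∣ Q.coeff 0 := by
  by_contra hQ
  -- the descent replaces `(P, Q)` by `(P', P)` with `deg P' < max (deg P) (deg Q)`
  induction hμ : max (2 * P.natDegree + 1) (2 * Q.natDegree) using Nat.strong_induction_on
    generalizing x f P Q with
  | _ μ ih =>
  have hpZ : Prime (p : ℤ) := Nat.prime_iff_prime_int.mp hp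
  have hf : f ≠ 0 := by
    rintro rfl
    exact hb 0 (by simp)
  have hbx : ¬ (p : ℤ) ^ f ∣ b x := by simpa using hb 1
  have hfin : FiniteMultiplicity (p : ℤ) (b x) := Int.finiteMultiplicity_iff.2
    ⟨by simpa using hp.ne_one, fun h => hbx (by rw [h]; exact dvd_zero _)⟩
  obtain ⟨u, hbu, hu⟩ := hfin.exists_eq_pow_mul_and_not_dvd
  set v := multiplicity (p : ℤ) (b x)
  have hvf : v < f := by
    by_contra! hfv
    exact hbx (hbu ▸ (pow_dvd_pow _ hfv).mul_right _)
  have hsplit : (p : ℤ) ^ f = p ^ v * p ^ (f - v) := by rw [← pow_add, Nat.add_sub_cancel' hvf.le]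
  obtain ⟨P', hdeg, hP'⟩ := exists_modEq_wcatSeries_succ (pow_ne_zero v hpZ.ne_zero) hbu
    ((hpZ.coprime_iff_not_dvd.2 hu).pow_left (m := f - v)) (hsplit ▸ hPQ)
  have hb' : ∀ k, ¬ (p : ℤ) ^ (f - v) ∣ ∏ i ∈ range k, b (x + 1 + i) := fun k hk => by
    refine hb (k + 1) ?_
    rw [prod_range_succ', hsplit, add_zero, hbu, mul_comm ((p : ℤ) ^ v)]
    exact mul_dvd_mul (by simpa only [add_right_comm, add_assoc] using hk) (dvd_mul_right _ _)
  have hP := not_dvd_coeff_zero_of_mul_wcatSeries_modEq hf hPQ hQ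
  have hP'0 := not_dvd_coeff_zero_of_mul_wcatSeries_modEq (Nat.sub_ne_zero_of_lt hvf) hP' hP
  have hne : P' ≠ 0 := by
    rintro rfl
    simp at hP'0
  have := hdeg hne
  have := Polynomial.natDegree_sub_le P Q
  exact ih _ (by omega) hb' hP' hP rfl

/-- The weighted Catalan numbers `C_n^b` are eventually periodic modulo `m > 0`
if and only if `m ∣ b(0)·b(1)⋯b(k)` for some `k ≥ 0`. -/
theorem weighted_catalan_eventually_periodic_iff
    (m : ℕ) (hm : 0 < m) (b : ℕ → ℤ) :
    (∃ (N T : ℕ), 0 < T ∧ ∀ n : ℕ, N ≤ n →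
      wcat b (n + T) 0 ≡ wcat b n 0 [ZMOD (m : ℤ)]) ↔
    (∃ k : ℕ, (m : ℤ) ∣ ∏ i ∈ Finset.range (k + 1), b i) := by
  constructor
  · rintro ⟨N, T, hT, hper⟩
    by_contra! hk
    have hprod : ∀ {j k}, j ≤ k → ∏ i ∈ range j, b i ∣ ∏ i ∈ range k, b i := fun hjk =>
      prod_dvd_prod_of_subset _ _ _ (range_subset_range.2 hjk)
    obtain ⟨p, e, hp, hpe, hb⟩ := exists_prime_pow_forall_not_dvd hm.ne' hprod
      fun k hdvd => hk k (hdvd.trans (hprod k.le_succ))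
    obtain ⟨P, Q, hQ, hPQ⟩ :=
      exists_polynomial_mul_modEq_of_eventually_periodic (c := (wcat b · 0)) hT hper
    have hdvd := dvd_coeff_zero_of_modEq_wcatSeries hp (x := 0) (by simpa using hb)
      fun n => (hPQ n).of_dvd (by exact_mod_cast hpe)
    rw [hQ, Int.natCast_dvd_ofNat, Nat.dvd_one] at hdvd
    exact hp.ne_one hdvd
  · rintro ⟨k, hk⟩
    let b' i := if i < k + 1 then b i else 0
    have htrunc : ∀ n, wcat b n 0 ≡ wcat b' n 0 [ZMOD m] := fun n =>
      (wcat_modEq_of_eqOn (fun i hi => (if_pos (mem_Ico.1 hi).2).symm) n).of_dvd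
        (by rwa [← range_eq_Ico])
    obtain ⟨P, Q, hQ, hPQ⟩ := exists_polynomial_mul_wcatSeries_eq (b := b') (k := k + 1)
      (fun i hi => if_neg (by omega)) 0
    obtain ⟨N, T, hT, hper⟩ := eventually_periodic_modEq_of_polynomial_mul_eq hm.ne' hQ hPQ
    exact ⟨N, T, hT, fun n hn => ((htrunc _).trans (hper n hn)).trans (htrunc n).symm⟩
end

section
/- Let m be a positive integer, let P, Q ∈ ℤ[X] be polynomials with deg P < deg Q, such that both the constant coefficient and the leading coefficient of Q are coprime to m, and let a : ℕ → ℤ be a sequence whose generating function satisfies Q(X) · Σ_{n≥0} a_n Xⁿ = P(X) as formal power series over ℤ. Then the sequence a_n modulo m is purely periodic: there exists T > 0 such that a_{n+T} ≡ a_n (mod m) for all n ≥ 0. -/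
/-!
Reduce modulo `m` and rescale `Q` to be monic. The quotient `(ℤ/m)[X]/(Q)` is then a finite
ring in which `X` is a unit (because `Q(0)` is), so `X ^ T = 1` there for some `T > 0`, i.e.
`Q ∣ X ^ T - 1`. Multiplying `Q · A = P` by the cofactor gives `(X ^ T - 1) · A = F` with
`deg F < T`, and comparing coefficients of degree `≥ T` shows that `A` is `T`-periodic.
-/

open Polynomial
open scoped PowerSeries

theorem Polynomial.isUnit_root_of_isUnit_coeff_zero {R : Type*} [CommRing R] {Q : R[X]}
    (h : IsUnit (Q.coeff 0)) : IsUnit (AdjoinRoot.root Q) := by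
  have hQ : AdjoinRoot.root Q * AdjoinRoot.mk Q Q.divX = -AdjoinRoot.of Q (Q.coeff 0) := by
    rw [eq_neg_iff_add_eq_zero, ← AdjoinRoot.mk_X, ← AdjoinRoot.mk_C, ← map_mul, ← map_add,
      X_mul_divX_add, AdjoinRoot.mk_self]
  exact isUnit_of_mul_isUnit_left (hQ ▸ (h.map _).neg)

theorem Polynomial.Monic.exists_dvd_X_pow_sub_one {R : Type*} [CommRing R] [Finite R] {Q : R[X]}
    (hQ : Q.Monic) (h0 : IsUnit (Q.coeff 0)) : ∃ T, 0 < T ∧ Q ∣ X ^ T - 1 := by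
  have := hQ.finite_adjoinRoot
  have : Finite (AdjoinRoot Q) := Module.finite_of_finite R
  have hfin := (isUnit_root_of_isUnit_coeff_zero h0).isOfFinOrder
  refine ⟨orderOf (AdjoinRoot.root Q), hfin.orderOf_pos, ?_⟩
  rw [← AdjoinRoot.mk_eq_zero, map_sub, map_pow, map_one, AdjoinRoot.mk_X, pow_orderOf_eq_one,
    sub_self]

theorem Polynomial.Monic.degree_mul_lt_of_mul_eq_X_pow_sub_one {R : Type*} [CommRing R]
    {Q P F : R[X]} {T : ℕ} (hQ : Q.Monic) (hdeg : P.degree < Q.degree)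
    (hF : Q * F = X ^ T - 1) : (F * P).degree < T := by
  rcases eq_or_ne F 0 with rfl | hF0
  · simp
  calc (F * P).degree ≤ F.degree + P.degree := degree_mul_le _ _
    _ < F.degree + Q.degree := WithBot.add_lt_add_left (degree_ne_bot.mpr hF0) hdeg
    _ = (X ^ T - 1 : R[X]).degree := by rw [← hF, mul_comm, hQ.degree_mul]
    _ ≤ T :=
      (degree_sub_le _ _).trans (max_le (degree_X_pow_le T) (degree_one_le.trans (by simp)))

namespace PowerSeries

variable {R : Type*} [CommRing R]

theorem coeff_add_eq_of_X_pow_sub_one_mul_eq {T : ℕ} {A : R⟦X⟧} {F : R[X]}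
    (hdeg : F.degree < T) (h : ((Polynomial.X ^ T - 1 : R[X]) : R⟦X⟧) * A = F) (n : ℕ) :
    coeff (n + T) A = coeff n A := by
  have := congrArg (coeff (n + T)) h
  rw [Polynomial.coe_sub, Polynomial.coe_pow, Polynomial.coe_one, Polynomial.coe_X, sub_mul,
    one_mul, map_sub, coeff_X_pow_mul, Polynomial.coeff_coe,
    coeff_eq_zero_of_degree_lt (hdeg.trans_le (by exact_mod_cast Nat.le_add_left T n))] at this
  exact (sub_eq_zero.mp this).symm

theorem coeff_add_eq_of_mul_eq_of_dvd {T : ℕ} {Q P : R[X]} {A : R⟦X⟧} (hQ : Q.Monic)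
    (hdeg : P.degree < Q.degree) (hT : Q ∣ Polynomial.X ^ T - 1) (h : (Q : R⟦X⟧) * A = P)
    (n : ℕ) :
    coeff (n + T) A = coeff n A := by
  obtain ⟨F, hF⟩ := hT
  refine coeff_add_eq_of_X_pow_sub_one_mul_eq (F := F * P)
    (hQ.degree_mul_lt_of_mul_eq_X_pow_sub_one hdeg hF.symm) ?_ n
  rw [hF, Polynomial.coe_mul, Polynomial.coe_mul, mul_comm (Q : R⟦X⟧), mul_assoc, h]

theorem exists_periodic_coeff_of_mul_eq [Finite R] {Q P : R[X]} {A : R⟦X⟧}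
    (hlead : IsUnit Q.leadingCoeff) (h0 : IsUnit (Q.coeff 0)) (hdeg : P.degree < Q.degree)
    (h : (Q : R⟦X⟧) * A = P) : ∃ T, 0 < T ∧ ∀ n, coeff (n + T) A = coeff n A := by
  obtain ⟨u, hu⟩ := hlead.exists_left_inv
  have hu' : IsUnit u := .of_mul_eq_one _ hu
  have hmonic : (Polynomial.C u * Q).Monic := monic_C_mul_of_mul_leadingCoeff_eq_one hu
  obtain ⟨T, hT, hdvd⟩ :=
    hmonic.exists_dvd_X_pow_sub_one (by rw [Polynomial.coeff_C_mul]; exact hu'.mul h0)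
  refine ⟨T, hT, coeff_add_eq_of_mul_eq_of_dvd hmonic (P := Polynomial.C u * P) ?_ hdvd ?_⟩
  · rwa [degree_C_mul_of_isUnit hu', degree_C_mul_of_isUnit hu']
  · rw [Polynomial.coe_mul, Polynomial.coe_mul, mul_assoc, h]

end PowerSeries

/-- If `deg P < deg Q`, the constant and leading coefficients of `Q` are coprime
to `m`, and `Q · ∑ aₙ Xⁿ = P` as formal power series, then the sequence `aₙ`
is purely periodic modulo `m`. -/
theorem purely_periodic_of_rational_generating_function
    (m : ℕ) (hm : 0 < m) (P Q : Polynomial ℤ)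
    (hdeg : P.degree < Q.degree)
    (hc0 : IsCoprime (Q.coeff 0) (m : ℤ))
    (hlead : IsCoprime Q.leadingCoeff (m : ℤ))
    (a : ℕ → ℤ)
    (hgen : (Q : PowerSeries ℤ) * PowerSeries.mk a = (P : PowerSeries ℤ)) :
    ∃ T : ℕ, 0 < T ∧ ∀ n : ℕ, a (n + T) ≡ a n [ZMOD (m : ℤ)] := by
  -- over the zero ring `ZMod 1` the reduced degrees would collapse to `⊥`
  rcases eq_or_ne m 1 with rfl | hm1
  · exact ⟨1, one_pos, fun n => Int.modEq_one⟩
  have : NeZero m := ⟨hm.ne'⟩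
  have : Nontrivial (ZMod m) := ZMod.nontrivial_iff.mpr hm1
  let φ := Int.castRingHom (ZMod m)
  have isUnit_cast {x : ℤ} (hx : IsCoprime x m) : IsUnit (φ x) :=
    isCoprime_zero_right.mp (by simpa using hx.map φ)
  have hφlead : φ Q.leadingCoeff ≠ 0 := (isUnit_cast hlead).ne_zero
  obtain ⟨T, hT, hper⟩ := PowerSeries.exists_periodic_coeff_of_mul_eq
    (Q := Q.map φ) (P := P.map φ) (A := PowerSeries.map φ (.mk a))
    (by rw [leadingCoeff_map_of_leadingCoeff_ne_zero _ hφlead]; exact isUnit_cast hlead)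
    (by rw [coeff_map]; exact isUnit_cast hc0)
    (by rw [degree_map_eq_of_leadingCoeff_ne_zero _ hφlead]; exact degree_map_le.trans_lt hdeg)
    (by rw [polynomial_map_coe, polynomial_map_coe, ← map_mul, hgen])
  refine ⟨T, hT, fun n => (ZMod.intCast_eq_intCast_iff _ _ _).mp ?_⟩
  simpa using hper n
end

section
/- Let p be a prime, m a nonnegative integer, and k a nonnegative integer with p^k > m. Then for all n ≥ 0, the binomial coefficient satisfies C(n + p^k, m) ≡ C(n, m) (mod p); that is, the sequence n ↦ C(n, m) mod p is periodic with period dividing the least power of p exceeding m. -/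
/-- For a prime `p` and `p^k > m`, the sequence `n ↦ C(n, m) mod p` is periodic
with period dividing `p^k`: `C(n + p^k, m) ≡ C(n, m) (mod p)` for all `n`. -/
theorem choose_periodic_mod_p
    (p : ℕ) (hp : p.Prime) (m k : ℕ) (h : m < p ^ k) (n : ℕ) :
    (n + p ^ k).choose m ≡ n.choose m [MOD p] := by
  haveI : Fact p.Prime := ⟨hp⟩
  have hppos : 0 < p := hp.pos
  have h1 := Choose.choose_modEq_choose_mul_prod_range_choose (n := n + p ^ k) (k := m) (p := p) k
  have h2 := Choose.choose_modEq_choose_mul_prod_range_choose (n := n) (k := m) (p := p) k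
  have hm : m / p ^ k = 0 := Nat.div_eq_of_lt h
  have hdigits : ∀ i ∈ Finset.range k,
      ((n + p ^ k) / p ^ i % p).choose (m / p ^ i % p)
        = (n / p ^ i % p).choose (m / p ^ i % p) := by
    intro i hi
    rw [Finset.mem_range] at hi
    have hdvd : p ^ i ∣ p ^ k := pow_dvd_pow p hi.le
    obtain ⟨c, hc⟩ := hdvd
    have : (n + p ^ k) / p ^ i = n / p ^ i + c := by
      rw [hc, Nat.add_mul_div_left _ _ (pow_pos hppos i)]
    rw [this]
    have hpc : p ∣ c := by
      have : p ^ k = p ^ i * c := hc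
      have hik : i + 1 ≤ k := hi
      have : p ^ i * p ∣ p ^ i * c := by
        rw [← pow_succ, ← hc]; exact pow_dvd_pow p hik
      exact (mul_dvd_mul_iff_left (pow_pos hppos i).ne').mp this
    rw [Nat.add_mod, Nat.mod_eq_zero_of_dvd hpc, Nat.add_zero, Nat.mod_mod_of_dvd _ dvd_rfl]
  rw [hm] at h1 h2
  have hprod : (∏ i ∈ Finset.range k, ((n + p ^ k) / p ^ i % p).choose (m / p ^ i % p))
      = ∏ i ∈ Finset.range k, (n / p ^ i % p).choose (m / p ^ i % p) :=
    Finset.prod_congr rfl hdigits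
  simp only [Nat.choose_zero_right, one_mul] at h1 h2
  rw [hprod] at h1
  have := h1.trans h2.symm
  rwa [Int.natCast_modEq_iff] at this
end

section
/- The Morse link numbers satisfy the explicit formula L_n ≡ 6·3ⁿ + 10·n·3ⁿ + 6·5ⁿ (mod 11) for all n ≥ 0, and consequently L_{n+55} ≡ L_n (mod 11) for all n ≥ 0; moreover 55 is the minimal period, i.e. there is no positive integer T < 55 and N ≥ 0 with L_{n+T} ≡ L_n (mod 11) for all n ≥ N. -/
def W (n x : ℕ) : ZMod 11 := ((wcat (fun x => (2 * (x : ℤ) + 1) ^ 2) n x : ℤ) : ZMod 11)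

lemma W_zero (x : ℕ) : W 0 x = 1 := by simp [W, wcat]

lemma W_succ (n x : ℕ) : W (n+1) x =
    (2 * (x : ZMod 11) + 1)^2 * ∑ i ∈ Finset.range (n+1), W i (x+1) * W (n - i) x := by
  rw [W, wcat]
  push_cast
  rw [Finset.sum_attach (Finset.range (n+1))
    (fun i => ((wcat (fun x => (2 * (x : ℤ) + 1) ^ 2) i (x+1) : ℤ) : ZMod 11) *
      ((wcat (fun x => (2 * (x : ℤ) + 1) ^ 2) (n - i) x : ℤ) : ZMod 11))]
  rfl

lemma h11 : (11 : ZMod 11) = 0 := by decide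

lemma W5 (n : ℕ) : W (n+1) 5 = 0 := by
  rw [W_succ]
  have : (2 * ((5:ℕ) : ZMod 11) + 1)^2 = 0 := by decide
  rw [this, zero_mul]

lemma W4 (n : ℕ) : W n 4 = 4^n := by
  induction n with
  | zero => simpa using W_zero 4
  | succ n ih =>
    rw [W_succ]
    have hsum : ∑ i ∈ Finset.range (n+1), W i 5 * W (n - i) 4 = W 0 5 * W n 4 := by
      apply Finset.sum_eq_single_of_mem 0 (by simp)
      intro i _ hi
      obtain ⟨m, rfl⟩ := Nat.exists_eq_succ_of_ne_zero hi
      rw [W5, zero_mul]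
    rw [hsum, W_zero, ih]
    show (2 * ((4:ℕ) : ZMod 11) + 1)^2 * (1 * 4^n) = 4^(n+1)
    have : (2 * ((4:ℕ) : ZMod 11) + 1)^2 = 4 := by decide
    rw [this]; ring

lemma W3 (n : ℕ) : W (n+1) 3 = 5 * 9^n := by
  induction n with
  | zero =>
    rw [W_succ]
    simp [Finset.sum_range_succ, W_zero]
    decide
  | succ n ih =>
    have hstep : W (n+2) 3 =
        (2 * ((3:ℕ) : ZMod 11) + 1)^2 *
          ((∑ i ∈ Finset.range (n+1), W (i+1) 4 * W (n - i) 3) + W 0 4 * W (n+1) 3) := by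
      rw [W_succ, Finset.sum_range_succ']
      congr 2
      apply Finset.sum_congr rfl
      intro i _
      rw [Nat.succ_sub_succ]
    have hprev : W (n+1) 3 =
        (2 * ((3:ℕ) : ZMod 11) + 1)^2 * ∑ i ∈ Finset.range (n+1), W i 4 * W (n - i) 3 :=
      W_succ n 3
    -- rewrite W (i+1) 4 = 4 * W i 4
    have h4s : ∑ i ∈ Finset.range (n+1), W (i+1) 4 * W (n - i) 3
        = 4 * ∑ i ∈ Finset.range (n+1), W i 4 * W (n - i) 3 := by
      rw [Finset.mul_sum]
      apply Finset.sum_congr rfl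
      intro i _
      rw [W4, W4, pow_succ]
      ring
    rw [h4s, W_zero] at hstep
    have hc : (2 * ((3:ℕ) : ZMod 11) + 1)^2 = 5 := by decide
    rw [hc] at hstep hprev
    rw [ih] at hprev
    -- hstep : W (n+2) 3 = 5 * (4 * S + 1 * W (n+1) 3), hprev : 5 * 9^n = 5 * S, ih
    rw [ih] at hstep
    linear_combination hstep - 4 * hprev

lemma W_succ' (n x : ℕ) : W (n+2) x =
    (2 * (x : ZMod 11) + 1)^2 *
      ((∑ i ∈ Finset.range (n+1), W (i+1) (x+1) * W (n - i) x) + W (n+1) x) := by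
  rw [W_succ, Finset.sum_range_succ']
  congr 2
  · apply Finset.sum_congr rfl
    intro i _
    rw [Nat.succ_sub_succ]
  · rw [W_zero, one_mul, Nat.sub_zero]




-- Level 2
noncomputable def T2 (n : ℕ) : ZMod 11 := ∑ i ∈ Finset.range (n+1), 9^i * W (n-i) 2

lemma he2 (n : ℕ) : W (n+2) 2 = 3 * (5 * T2 n + W (n+1) 2) := by
  rw [W_succ']
  have h1 : ∑ i ∈ Finset.range (n+1), W (i+1) 3 * W (n - i) 2 = 5 * T2 n := by
    rw [T2, Finset.mul_sum]
    apply Finset.sum_congr rfl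
    intro i _
    rw [W3]; ring
  have hc : ((2 * ((2:ℕ) : ZMod 11) + 1)^2 : ZMod 11) = 3 := by decide
  rw [h1, hc]

lemma hT2 (n : ℕ) : T2 (n+1) = 9 * T2 n + W (n+1) 2 := by
  rw [T2, Finset.sum_range_succ', T2, Finset.mul_sum]
  congr 1
  · apply Finset.sum_congr rfl
    intro i _
    rw [Nat.succ_sub_succ, pow_succ]; ring
  · rw [pow_zero, one_mul, Nat.sub_zero]

lemma rec2 (n : ℕ) : W (n+3) 2 = W (n+2) 2 - W (n+1) 2 := by
  have e1 := he2 (n+1)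
  have ht := hT2 n
  have e0 := he2 n
  linear_combination e1 + 15 * ht - 9 * e0 + (W (n+2) 2 - W (n+1) 2) * h11

lemma W12 : W 1 2 = 3 := by
  rw [W_succ]
  simp [Finset.sum_range_succ, W_zero]
  decide

lemma W22 : W 2 2 = 2 := by
  have h := he2 0
  have : T2 0 = 1 := by simp [T2, W_zero]
  rw [this, W12] at h
  rw [h]; decide

-- Level 1
noncomputable def U1 (n : ℕ) : ZMod 11 := ∑ i ∈ Finset.range (n+1), W (i+1) 2 * W (n-i) 1
noncomputable def V1 (n : ℕ) : ZMod 11 := ∑ i ∈ Finset.range (n+1), W (i+2) 2 * W (n-i) 1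

lemma hs1 (n : ℕ) : W (n+2) 1 = 9 * (U1 n + W (n+1) 1) := by
  rw [W_succ', U1]
  norm_num

lemma hU1 (n : ℕ) : U1 (n+1) = V1 n + 3 * W (n+1) 1 := by
  rw [U1, Finset.sum_range_succ', V1]
  congr 1
  · apply Finset.sum_congr rfl
    intro i _
    rw [Nat.succ_sub_succ]
  · rw [Nat.sub_zero, W12]

lemma hV1 (n : ℕ) : V1 (n+1) = V1 n - U1 n + 2 * W (n+1) 1 := by
  rw [V1, Finset.sum_range_succ']
  have h1 : ∑ i ∈ Finset.range (n+1), W (i+1+2) 2 * W (n+1-(i+1)) 1 = V1 n - U1 n := by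
    rw [V1, U1, ← Finset.sum_sub_distrib]
    apply Finset.sum_congr rfl
    intro i _
    rw [Nat.succ_sub_succ, rec2]; ring
  rw [h1, Nat.sub_zero, W22]

lemma rec1 (n : ℕ) : W (n+4) 1 = 10 * W (n+3) 1 + 6 * W (n+2) 1 := by
  have e0 := hs1 n
  have e1 := hs1 (n+1)
  have e2 := hs1 (n+2)
  have u0 := hU1 n
  have u1 := hU1 (n+1)
  have v0 := hV1 n
  linear_combination e2 + 9 * u1 + 9 * v0 - e1 - 9 * u0 + e0 + (W (n+2) 1) * h11

lemma W11 : W 1 1 = 9 := by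
  rw [W_succ]
  simp [Finset.sum_range_succ, W_zero]
  decide

lemma W21 : W 2 1 = 9 := by
  have h := hs1 0
  have hu : U1 0 = 3 := by simp [U1, W_zero, W12]
  rw [hu, W11] at h
  rw [h]; decide

lemma W31 : W 3 1 = 1 := by
  have h := hs1 1
  have hv : V1 0 = 2 := by simp [V1, W_zero, W22]
  have hu := hU1 0
  rw [hv, W11] at hu
  rw [hu] at h
  rw [W21] at h
  rw [h]; decide

lemma W1closed (n : ℕ) : W (n+1) 1 = 8 * 2^(n+1) + 6 * 8^(n+1) := by
  have key : ∀ m : ℕ, W (m+1) 1 = 8 * 2^(m+1) + 6 * 8^(m+1) ∧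
      W (m+2) 1 = 8 * 2^(m+2) + 6 * 8^(m+2) ∧ W (m+3) 1 = 8 * 2^(m+3) + 6 * 8^(m+3) := by
    intro m
    induction m with
    | zero =>
      refine ⟨?_, ?_, ?_⟩
      · rw [W11]; decide
      · rw [W21]; decide
      · rw [W31]; decide
    | succ m ih =>
      refine ⟨ih.2.1, ih.2.2, ?_⟩
      rw [rec1 m, ih.2.2, ih.2.1]
      linear_combination (64 * (2:ZMod 11)^m + 768 * (8:ZMod 11)^m) * h11
  exact (key n).1

-- Level 0
noncomputable def A0 (n : ℕ) : ZMod 11 := ∑ i ∈ Finset.range (n+1), 2^i * W (n-i) 0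
noncomputable def B0 (n : ℕ) : ZMod 11 := ∑ i ∈ Finset.range (n+1), 8^i * W (n-i) 0

lemma he0 (n : ℕ) : W (n+2) 0 = 16 * A0 n + 48 * B0 n + W (n+1) 0 := by
  have h := W_succ' n 0
  have hc : ((2 * ((0:ℕ) : ZMod 11) + 1)^2 : ZMod 11) = 1 := by decide
  rw [hc, one_mul] at h
  have h1 : ∑ i ∈ Finset.range (n+1), W (i+1) 1 * W (n - i) 0
      = 16 * A0 n + 48 * B0 n := by
    rw [A0, B0, Finset.mul_sum, Finset.mul_sum, ← Finset.sum_add_distrib]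
    apply Finset.sum_congr rfl
    intro i _
    rw [W1closed, pow_succ, pow_succ]
    ring
  rw [h1] at h
  exact h

lemma hA0 (n : ℕ) : A0 (n+1) = 2 * A0 n + W (n+1) 0 := by
  rw [A0, Finset.sum_range_succ', A0, Finset.mul_sum]
  congr 1
  · apply Finset.sum_congr rfl
    intro i _
    rw [Nat.succ_sub_succ, pow_succ]; ring
  · rw [pow_zero, one_mul, Nat.sub_zero]

lemma hB0 (n : ℕ) : B0 (n+1) = 8 * B0 n + W (n+1) 0 := by
  rw [B0, Finset.sum_range_succ', B0, Finset.mul_sum]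
  congr 1
  · apply Finset.sum_congr rfl
    intro i _
    rw [Nat.succ_sub_succ, pow_succ]; ring
  · rw [pow_zero, one_mul, Nat.sub_zero]

lemma rec0 (n : ℕ) : W (n+4) 0 = 5 * W (n+2) 0 + W (n+1) 0 := by
  have e0 := he0 n
  have e1 := he0 (n+1)
  have e2 := he0 (n+2)
  have a1 := hA0 n
  have a2 := hA0 (n+1)
  have b1 := hB0 n
  have b2 := hB0 (n+1)
  linear_combination e2 + 16 * a2 + 48 * b2 - 128 * a1 - 96 * b1 - 10 * e1 + 16 * e0 +
    (W (n+3) 0 + 3 * W (n+2) 0 - 19 * W (n+1) 0) * h11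

lemma W10 : W 1 0 = 1 := by
  rw [W_succ]
  simp [Finset.sum_range_succ, W_zero]

lemma W20 : W 2 0 = 10 := by
  have h := he0 0
  have ha : A0 0 = 1 := by simp [A0, W_zero]
  have hb : B0 0 = 1 := by simp [B0, W_zero]
  rw [ha, hb, W10] at h
  rw [h]; decide

lemma W30 : W 3 0 = 6 := by
  have h := he0 1
  have ha : A0 1 = 3 := by rw [hA0, W10]; have : A0 0 = 1 := by simp [A0, W_zero]
                           rw [this]; decide
  have hb : B0 1 = 9 := by rw [hB0, W10]; have : B0 0 = 1 := by simp [B0, W_zero]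
                           rw [this]; decide
  rw [ha, hb, W20] at h
  rw [h]; decide

noncomputable def Aa (n : ℕ) : ZMod 11 := 6 * 3^n + 10 * (n : ZMod 11) * 3^n + 6 * 5^n

lemma Aa_rec (n : ℕ) : Aa (n+4) = 5 * Aa (n+2) + Aa (n+1) := by
  unfold Aa
  push_cast
  linear_combination ((228 + 30 * (n : ZMod 11)) * (3:ZMod 11)^n + 270 * (5:ZMod 11)^n) * h11

lemma Wmain (n : ℕ) : W n 0 = Aa n := by
  have key : ∀ m : ℕ, W (m+1) 0 = Aa (m+1) ∧ W (m+2) 0 = Aa (m+2) ∧ W (m+3) 0 = Aa (m+3) := by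
    intro m
    induction m with
    | zero =>
      refine ⟨?_, ?_, ?_⟩
      · rw [W10]; decide
      · rw [W20]; decide
      · rw [W30]; decide
    | succ m ih =>
      refine ⟨ih.2.1, ih.2.2, ?_⟩
      rw [rec0 m, ih.2.1, ih.1, Aa_rec]
  cases n with
  | zero => rw [W_zero]; decide
  | succ m => exact (key m).1



/-- `morseLink n` is the number `L_n` of combinatorial types of Morse links of
order `n`: the weighted Catalan number for the weight `b(x) = (2x+1)²`. -/
def morseLink (n : ℕ) : ℤ := wcat (fun x => (2 * (x : ℤ) + 1) ^ 2) n 0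

lemma Aa_per (n : ℕ) : Aa (n + 55) = Aa n := by
  unfold Aa
  push_cast
  have h3 : (3 : ZMod 11)^55 = 1 := by decide
  have h5 : (5 : ZMod 11)^55 = 1 := by decide
  have h55 : (55 : ZMod 11) = 0 := by decide
  rw [pow_add, pow_add, h3, h5, h55]
  ring

lemma Aa_iter55 (j : ℕ) : ∀ m, Aa (m + 55 * j) = Aa m := by
  induction j with
  | zero => intro m; rfl
  | succ j ih =>
    intro m
    have e : m + 55 * (j+1) = (m + 55 * j) + 55 := by ring
    rw [e, Aa_per, ih]

lemma cast_morse (n : ℕ) : ((morseLink n : ℤ) : ZMod 11) = Aa n := Wmain n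


/-- `L_n ≡ 6·3ⁿ + 10·n·3ⁿ + 6·5ⁿ (mod 11)` for all `n`, hence
`L_{n+55} ≡ L_n (mod 11)` for all `n`, and `55` is the minimal (eventual) period
of `L_n` modulo 11. -/
theorem morseLink_mod_eleven :
    (∀ n : ℕ, morseLink n ≡
      6 * 3 ^ n + 10 * (n : ℤ) * 3 ^ n + 6 * 5 ^ n [ZMOD 11]) ∧
    (∀ n : ℕ, morseLink (n + 55) ≡ morseLink n [ZMOD 11]) ∧
    ¬ ∃ T : ℕ, 0 < T ∧ T < 55 ∧ ∃ N : ℕ, ∀ n : ℕ, N ≤ n →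
      morseLink (n + T) ≡ morseLink n [ZMOD 11] := by
  refine ⟨?_, ?_, ?_⟩
  · intro n
    refine (ZMod.intCast_eq_intCast_iff _ _ 11).mp ?_
    rw [cast_morse, Aa]
    push_cast
    ring
  · intro n
    refine (ZMod.intCast_eq_intCast_iff _ _ 11).mp ?_
    rw [cast_morse, cast_morse, Aa_per]
  · rintro ⟨T, hT0, hT55, N, hper⟩
    have hA : ∀ n, N ≤ n → Aa (n + T) = Aa n := by
      intro n hn
      have h := (ZMod.intCast_eq_intCast_iff _ _ 11).mpr (hper n hn)
      rw [cast_morse, cast_morse] at h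
      exact h
    have key : ∀ m, Aa (m + T) = Aa m := by
      intro m
      have h1 := hA (m + 55 * N) (by omega)
      have e1 : m + 55 * N + T = (m + T) + 55 * N := by omega
      rw [e1, Aa_iter55 N (m + T), Aa_iter55 N m] at h1
      exact h1
    have iterT : ∀ k m, Aa (m + k * T) = Aa m := by
      intro k
      induction k with
      | zero => intro m; simp
      | succ k ih =>
        intro m
        have e : m + (k+1) * T = (m + T) + k * T := by ring
        rw [e, ih, key]
    by_cases hdvd : T % 11 = 0
    · obtain ⟨s, rfl⟩ : ∃ s, T = 11 * s := ⟨T / 11, by omega⟩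
      have hs1 : 0 < s := by omega
      have hs4 : s < 5 := by omega
      interval_cases s
      · exact absurd (key 0) (by decide)
      · have h1 := iterT 3 0
        have e : 0 + 3 * (11 * 2) = 11 + 55 * 1 := by norm_num
        rw [e, Aa_iter55 1 11] at h1
        exact absurd h1 (by decide)
      · have h1 := iterT 2 0
        have e : 0 + 2 * (11 * 3) = 11 + 55 * 1 := by norm_num
        rw [e, Aa_iter55 1 11] at h1
        exact absurd h1 (by decide)
      · have h1 := iterT 4 0
        have e : 0 + 4 * (11 * 4) = 11 + 55 * 3 := by norm_num
        rw [e, Aa_iter55 3 11] at h1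
        exact absurd h1 (by decide)
    · have h1 := iterT 5 0
      have e : 0 + 5 * T = 5 * (T % 11) + 55 * (T / 11) := by omega
      rw [e, Aa_iter55 (T / 11) (5 * (T % 11))] at h1
      obtain ⟨u, hu⟩ : ∃ u, T % 11 = u := ⟨_, rfl⟩
      rw [hu] at h1
      have hu0 : 0 < u := by omega
      have hu11 : u < 11 := by omega
      interval_cases u <;> exact absurd h1 (by decide)
end
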